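/- arXiv:1111.6388 — 7 statements merged into one kernel-verified Lean document; each statement's English description precedes it below -/
import Mathlib

section
/- Let A be a continuous linear map on ℝⁿ, let Z : ℝ → ℝ be continuous, and let F : ℝⁿ → ℝⁿ be twice continuously differentiable with F(0) = 0 and with DF and D²F bounded on ℝⁿ. For ε ∈ [0,1] let Φ_ε : [0,T] → ℝⁿ be the solution of Φ_ε'(t) = A Φ_ε(t) + ε Z(t) Φ_ε(t) + e^{−εZ(t)} F(e^{εZ(t)} Φ_ε(t)) with Φ_ε(0) = Φ⁰. Let Φ⁽ᵈ⁾ solve Φ⁽ᵈ⁾'(t) = A Φ⁽ᵈ⁾(t) + F(Φ⁽ᵈ⁾(t)), Φ⁽ᵈ⁾(0) = Φ⁰, and let Φ⁽¹⁾ solve the linear equation Φ⁽¹⁾'(t) = (A + DF(Φ⁽ᵈ⁾(t))) Φ⁽¹⁾(t) + Z(t) [Φ⁽ᵈ⁾(t) − F(Φ⁽ᵈ⁾(t)) + DF(Φ⁽ᵈ⁾(t)) Φ⁽ᵈ⁾(t)], Φ⁽¹⁾(0) = 0. Then for every T > 0 there is a constant C (depending on T, A, Z, F, Φ⁰ but not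 on ε) such that sup_{0 ≤ t ≤ T} ‖Φ_ε(t) − Φ⁽ᵈ⁾(t) − ε Φ⁽¹⁾(t)‖ ≤ C ε² for all ε ∈ [0,1]. -/
/-!
Let `R = Φ ε - Φd - ε • Φ1`, so `R 0 = 0`. Subtracting the three equations and expanding to second
order, `R' = (A + εZ + DF(Φd)) R + N`, where `N` consists of `ε² Z Φ1`, the Taylor remainder of `F`
at `Φd`, the second-order remainder of `c ↦ e^{-c} F(e^c x)` at `c = 0`, and `εZ` times the
increment of `x ↦ DF(x) x - F(x)` from `Φd` to `Φ ε`. Since `DF` and `D²F` are bounded and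
`Φ ε`, `Φd`, `Φ1`, `Z` are bounded on `[0, T]` uniformly in `ε` (for `Φ ε` by Grönwall, as
`‖F x‖ ≤ C ‖x‖`), this gives `‖R'‖ ≤ K ‖R‖ + δ ε²`, and Grönwall yields `‖R‖ ≤ δ T e^{KT} ε²`.
-/

open Real Set NNReal

theorem Real.abs_exp_sub_one_le_abs_mul_exp_abs (x : ℝ) : |exp x - 1| ≤ |x| * exp |x| := by
  have h : ‖Complex.exp x - 1‖ ≤ |x| * exp |x| := by
    simpa using Complex.norm_exp_sub_sum_le_norm_mul_exp x 1
  exact_mod_cast h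

theorem Real.abs_exp_sub_one_sub_id_le_sq_mul_exp_abs (x : ℝ) :
    |exp x - 1 - x| ≤ x ^ 2 * exp |x| := by
  have h : ‖Complex.exp x - 1 - x‖ ≤ x ^ 2 * exp |x| := by
    simpa [Finset.sum_range_succ, sub_sub] using Complex.norm_exp_sub_sum_le_norm_mul_exp x 2
  exact_mod_cast h

theorem Real.exp_sub_one_le_mul_exp (x : ℝ) : exp x - 1 ≤ x * exp x := by
  have h := mul_le_mul_of_nonneg_right (add_one_le_exp (-x)) (exp_pos x).le
  rw [← exp_add, neg_add_cancel, exp_zero] at h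
  linarith

theorem abs_mul_le_mul_of_nonneg_of_abs_le {a b M : ℝ} (ha : 0 ≤ a) (hb : |b| ≤ M) :
    |a * b| ≤ a * M := by
  rw [abs_mul, abs_of_nonneg ha]
  gcongr

theorem abs_mul_le_of_mem_Icc_of_abs_le {a b M : ℝ} (ha : a ∈ Icc (0 : ℝ) 1) (hb : |b| ≤ M) :
    |a * b| ≤ M :=
  (abs_mul_le_mul_of_nonneg_of_abs_le ha.1 hb).trans
    (mul_le_of_le_one_left ((abs_nonneg b).trans hb) ha.2)

theorem norm_le_of_norm_deriv_le_mul_add {E : Type*} [NormedAddCommGroup E] [NormedSpace ℝ E]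
    {f f' : ℝ → E} {K δ T : ℝ} (hK : 0 ≤ K) (hδ : 0 ≤ δ)
    (hf : ∀ t ∈ Icc 0 T, HasDerivAt f (f' t) t)
    (bound : ∀ t ∈ Icc 0 T, ‖f' t‖ ≤ K * ‖f t‖ + δ) {t : ℝ} (ht : t ∈ Icc 0 T) :
    ‖f t‖ ≤ (‖f 0‖ + δ * T) * exp (K * T) := by
  have hgronwall := norm_le_gronwallBound_of_norm_deriv_right_le
    (fun s hs => (hf s hs).continuousAt.continuousWithinAt)
    (fun s hs => (hf s (Ico_subset_Icc_self hs)).hasDerivWithinAt) le_rfl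
    (fun s hs => bound s (Ico_subset_Icc_self hs)) t ht
  rw [sub_zero] at hgronwall
  refine hgronwall.trans ((gronwallBound_mono (norm_nonneg _) hδ hK ht.2).trans ?_)
  rcases hK.eq_or_lt with rfl | hK
  · simp [gronwallBound_K0]
  · rw [gronwallBound_of_K_ne_0 hK.ne']
    calc ‖f 0‖ * exp (K * T) + δ / K * (exp (K * T) - 1)
        ≤ ‖f 0‖ * exp (K * T) + δ / K * (K * T * exp (K * T)) := by
          gcongr; exact exp_sub_one_le_mul_exp _
      _ = (‖f 0‖ + δ * T) * exp (K * T) := by field_simp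

theorem IsCompact.exists_nnreal_bound_of_continuousOn {α G : Type*} [TopologicalSpace α]
    [SeminormedAddCommGroup G] {s : Set α} (hs : IsCompact s) {g : α → G}
    (hg : ContinuousOn g s) : ∃ C : ℝ≥0, ∀ x ∈ s, ‖g x‖ ≤ C := by
  obtain ⟨C, hC⟩ := hs.exists_bound_of_continuousOn hg
  exact ⟨C.toNNReal, fun x hx => (hC x hx).trans (Real.le_coe_toNNReal C)⟩

theorem exists_nnreal_bound_of_hasDerivAt_Icc {G : Type*} [NormedAddCommGroup G]
    [NormedSpace ℝ G] {g g' : ℝ → G} {a b : ℝ} (hg : ∀ t ∈ Icc a b, HasDerivAt g (g' t) t) :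
    ∃ C : ℝ≥0, ∀ t ∈ Icc a b, ‖g t‖ ≤ C :=
  isCompact_Icc.exists_nnreal_bound_of_continuousOn
    fun t ht => (hg t ht).continuousAt.continuousWithinAt

section LipschitzDerivative

variable {E G : Type*} [NormedAddCommGroup E] [NormedSpace ℝ E] [NormedAddCommGroup G]
  [NormedSpace ℝ G] {f : E → G} {C₁ C₂ : ℝ≥0}

theorem lipschitzWith_toNNReal_of_norm_fderiv_le {C : ℝ} (hf : Differentiable ℝ f)
    (bound : ∀ x, ‖fderiv ℝ f x‖ ≤ C) : LipschitzWith C.toNNReal f :=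
  lipschitzWith_of_nnnorm_fderiv_le hf fun x => by
    rw [← NNReal.coe_le_coe, coe_nnnorm]
    exact (bound x).trans (Real.le_coe_toNNReal C)

theorem norm_sub_sub_fderiv_apply_le (hf : Differentiable ℝ f)
    (hf' : LipschitzWith C₂ (fderiv ℝ f)) (x y : E) :
    ‖f y - f x - fderiv ℝ f x (y - x)‖ ≤ C₂ * ‖y - x‖ ^ 2 := by
  have h := (convex_closedBall x ‖y - x‖).norm_image_sub_le_of_norm_fderiv_le'
    (φ := fderiv ℝ f x) (C := C₂ * ‖y - x‖) (fun w _ => hf w) (fun w hw => ?_)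
    (Metric.mem_closedBall_self (norm_nonneg _)) (by rw [Metric.mem_closedBall, dist_eq_norm])
  · rwa [mul_assoc, ← sq] at h
  · calc ‖fderiv ℝ f w - fderiv ℝ f x‖ ≤ C₂ * ‖w - x‖ := hf'.norm_sub_le w x
      _ ≤ C₂ * ‖y - x‖ := by gcongr; simpa [dist_eq_norm] using hw

/-- The first-order term `c • (Df x x - f x)` is the source of the forcing in the equation
for `Φ1`. -/
theorem norm_rescale_sub_le (hf : Differentiable ℝ f) (hf' : LipschitzWith C₂ (fderiv ℝ f))
    (hf0 : f 0 = 0) (c : ℝ) (x : E) :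
    ‖exp (-c) • f (exp c • x) - f x - c • (fderiv ℝ f x x - f x)‖
      ≤ 2 * C₂ * exp |c| ^ 3 * ‖x‖ ^ 2 * c ^ 2 := by
  have hsplit : exp (-c) • f (exp c • x) - f x - c • (fderiv ℝ f x x - f x)
      = exp (-c) • (f (exp c • x) - f x - fderiv ℝ f x (exp c • x - x))
        + (exp (-c) - 1 - -c) • (f x - fderiv ℝ f x x) := by
    have he : exp (-c) * exp c = 1 := by rw [← exp_add, neg_add_cancel, exp_zero]
    simp only [map_sub, map_smul]
    match_scalars <;> first | ring1 | linear_combination he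
  have hexp₁ : |exp c - 1| ≤ |c| * exp |c| := abs_exp_sub_one_le_abs_mul_exp_abs c
  have hexp₂ : |exp (-c) - 1 - -c| ≤ c ^ 2 * exp |c| := by
    simpa using abs_exp_sub_one_sub_id_le_sq_mul_exp_abs (-c)
  have htaylor := norm_sub_sub_fderiv_apply_le hf hf' x (exp c • x)
  have htaylor₀ : ‖f x - fderiv ℝ f x x‖ ≤ C₂ * ‖x‖ ^ 2 := by
    have h := norm_sub_sub_fderiv_apply_le hf hf' x 0
    rwa [hf0, zero_sub, zero_sub, map_neg, neg_sub_neg, norm_sub_rev, norm_neg] at h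
  have hstep : ‖exp c • x - x‖ ≤ |c| * exp |c| * ‖x‖ := by
    rw [show exp c • x - x = (exp c - 1) • x by rw [sub_smul, one_smul], norm_smul,
      Real.norm_eq_abs]
    gcongr
  have hcube : exp |c| ≤ exp |c| ^ 3 := le_self_pow₀ (one_le_exp (abs_nonneg c)) (by norm_num)
  rw [hsplit]
  calc _ ≤ exp |c| * (C₂ * (|c| * exp |c| * ‖x‖) ^ 2) + c ^ 2 * exp |c| * (C₂ * ‖x‖ ^ 2) := by
        refine (norm_add_le _ _).trans ?_
        rw [norm_smul, norm_smul, Real.norm_eq_abs, Real.norm_eq_abs, abs_of_pos (exp_pos _)]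
        gcongr
        · exact neg_le_abs c
        · exact htaylor.trans (by gcongr)
    _ = C₂ * c ^ 2 * ‖x‖ ^ 2 * (exp |c| ^ 3 + exp |c|) := by
        rw [mul_pow, mul_pow, sq_abs]; ring
    _ ≤ C₂ * c ^ 2 * ‖x‖ ^ 2 * (exp |c| ^ 3 + exp |c| ^ 3) := by gcongr
    _ = 2 * C₂ * exp |c| ^ 3 * ‖x‖ ^ 2 * c ^ 2 := by ring

theorem norm_fderiv_apply_self_sub_sub_le (hf : LipschitzWith C₁ f)
    (hf' : LipschitzWith C₂ (fderiv ℝ f)) (x d : E) :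
    ‖(fderiv ℝ f x x - f x) - (fderiv ℝ f d d - f d)‖ ≤ (2 * C₁ + C₂ * ‖d‖) * ‖x - d‖ := by
  have hsplit : (fderiv ℝ f x x - f x) - (fderiv ℝ f d d - f d)
      = fderiv ℝ f x (x - d) + (fderiv ℝ f x - fderiv ℝ f d) d - (f x - f d) := by
    simp only [map_sub, sub_apply]; abel
  rw [hsplit]
  calc _ ≤ ‖fderiv ℝ f x (x - d)‖ + ‖(fderiv ℝ f x - fderiv ℝ f d) d‖ + ‖f x - f d‖ :=
        norm_sub_le_of_le (norm_add_le _ _) le_rfl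
    _ ≤ C₁ * ‖x - d‖ + C₂ * ‖x - d‖ * ‖d‖ + C₁ * ‖x - d‖ := by
        gcongr
        · exact (ContinuousLinearMap.le_opNorm _ _).trans
            (by gcongr; exact norm_fderiv_le_of_lipschitz ℝ hf)
        · exact (ContinuousLinearMap.le_opNorm _ _).trans (by gcongr; exact hf'.norm_sub_le x d)
        · exact hf.norm_sub_le x d
    _ = (2 * C₁ + C₂ * ‖d‖) * ‖x - d‖ := by ring

end LipschitzDerivative

section Expansion

variable {E : Type*} [NormedAddCommGroup E] [NormedSpace ℝ E] (A : E →L[ℝ] E) {F : E → E}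
  {C₁ C₂ : ℝ≥0} {ε z M : ℝ}

theorem norm_perturbedField_le (hF : LipschitzWith C₁ F) (hF0 : F 0 = 0)
    (hε : ε ∈ Icc (0 : ℝ) 1) (hz : |z| ≤ M) (v : E) :
    ‖A v + (ε * z) • v + exp (-(ε * z)) • F (exp (ε * z) • v)‖ ≤ (‖A‖ + M + C₁) * ‖v‖ := by
  have hc : |ε * z| ≤ M := abs_mul_le_of_mem_Icc_of_abs_le hε hz
  have hFv : ∀ w, ‖F w‖ ≤ C₁ * ‖w‖ := fun w => by simpa [hF0] using hF.norm_sub_le w 0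
  calc _ ≤ ‖A v‖ + ‖(ε * z) • v‖ + ‖exp (-(ε * z)) • F (exp (ε * z) • v)‖ := norm_add₃_le
    _ ≤ ‖A‖ * ‖v‖ + M * ‖v‖ + exp (-(ε * z)) * (C₁ * (exp (ε * z) * ‖v‖)) := by
        rw [norm_smul, norm_smul, Real.norm_eq_abs, Real.norm_of_nonneg (exp_pos _).le]
        gcongr
        · exact A.le_opNorm v
        · refine (hFv _).trans_eq ?_
          rw [norm_smul, Real.norm_of_nonneg (exp_pos _).le]
    _ = (‖A‖ + M + C₁) * ‖v‖ := by
        have he : exp (-(ε * z)) * exp (ε * z) = 1 := by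
          rw [← exp_add, neg_add_cancel, exp_zero]
        linear_combination (C₁ * ‖v‖ : ℝ) * he

theorem perturbedField_sub_expansion_eq (F : E → E) (ε z : ℝ) (x d p : E) :
    A x + (ε * z) • x + exp (-(ε * z)) • F (exp (ε * z) • x) - (A d + F d)
        - ε • (A p + fderiv ℝ F d p + z • (d - F d + fderiv ℝ F d d))
      = (A (x - d - ε • p) + (ε * z) • (x - d - ε • p) + fderiv ℝ F d (x - d - ε • p)
          + (ε * (ε * z)) • p)
        + ((exp (-(ε * z)) • F (exp (ε * z) • x) - F x - (ε * z) • (fderiv ℝ F x x - F x))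
          + (F x - F d - fderiv ℝ F d (x - d))
          + (ε * z) • ((fderiv ℝ F x x - F x) - (fderiv ℝ F d d - F d))) := by
  simp only [map_sub, map_smul]
  module

theorem norm_linearPart_le (hF : LipschitzWith C₁ F) (hε : ε ∈ Icc (0 : ℝ) 1) (hz : |z| ≤ M)
    {B₁ : ℝ} {p : E} (hp : ‖p‖ ≤ B₁) (d R : E) :
    ‖A R + (ε * z) • R + fderiv ℝ F d R + (ε * (ε * z)) • p‖
      ≤ (‖A‖ + M + C₁) * ‖R‖ + M * B₁ * ε ^ 2 := by
  have hM : 0 ≤ M := (abs_nonneg z).trans hz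
  have hc : |ε * z| ≤ M := abs_mul_le_of_mem_Icc_of_abs_le hε hz
  have hεc : |ε * (ε * z)| ≤ ε * (ε * M) :=
    abs_mul_le_mul_of_nonneg_of_abs_le hε.1 (abs_mul_le_mul_of_nonneg_of_abs_le hε.1 hz)
  calc _ ≤ ‖A R‖ + ‖(ε * z) • R‖ + ‖fderiv ℝ F d R‖ + ‖(ε * (ε * z)) • p‖ := norm_add₄_le
    _ ≤ ‖A‖ * ‖R‖ + M * ‖R‖ + C₁ * ‖R‖ + ε * (ε * M) * B₁ := by
        rw [norm_smul, norm_smul, Real.norm_eq_abs, Real.norm_eq_abs]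
        gcongr
        · exact A.le_opNorm R
        · exact (ContinuousLinearMap.le_opNorm _ _).trans
            (by gcongr; exact norm_fderiv_le_of_lipschitz ℝ hF)
        · exact mul_nonneg hε.1 (mul_nonneg hε.1 hM)
    _ = (‖A‖ + M + C₁) * ‖R‖ + M * B₁ * ε ^ 2 := by ring

theorem norm_nonlinearPart_le (hFd : Differentiable ℝ F) (hF : LipschitzWith C₁ F)
    (hDF : LipschitzWith C₂ (fderiv ℝ F)) (hF0 : F 0 = 0) (hε : ε ∈ Icc (0 : ℝ) 1)
    (hz : |z| ≤ M) {B B_d B₁ : ℝ} {x d p : E} (hx : ‖x‖ ≤ B) (hd : ‖d‖ ≤ B_d) (hp : ‖p‖ ≤ B₁) :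
    ‖(exp (-(ε * z)) • F (exp (ε * z) • x) - F x - (ε * z) • (fderiv ℝ F x x - F x))
        + (F x - F d - fderiv ℝ F d (x - d))
        + (ε * z) • ((fderiv ℝ F x x - F x) - (fderiv ℝ F d d - F d))‖
      ≤ (C₂ * (B + B_d + B₁) + M * (2 * C₁ + C₂ * B_d)) * ‖x - d - ε • p‖
        + (2 * C₂ * exp M ^ 3 * B ^ 2 * M ^ 2 + C₂ * B₁ ^ 2 + M * (2 * C₁ + C₂ * B_d) * B₁)
          * ε ^ 2 := by
  have hM : 0 ≤ M := (abs_nonneg z).trans hz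
  have hc : |ε * z| ≤ ε * M := abs_mul_le_mul_of_nonneg_of_abs_le hε.1 hz
  have hcM : |ε * z| ≤ M := abs_mul_le_of_mem_Icc_of_abs_le hε hz
  obtain ⟨hε0, hε1⟩ := hε
  set R := x - d - ε • p
  have hxd : ‖x - d‖ ≤ ‖R‖ + ε * B₁ := by
    calc ‖x - d‖ = ‖R + ε • p‖ := by rw [sub_add_cancel]
      _ ≤ ‖R‖ + ε * B₁ := by
        refine (norm_add_le _ _).trans ?_
        rw [norm_smul, Real.norm_of_nonneg hε0]
        gcongr
  have hxd' : ‖x - d‖ ≤ B + B_d := (norm_sub_le x d).trans (add_le_add hx hd)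
  have hB₁ : 0 ≤ B₁ := (norm_nonneg p).trans hp
  have hrescale := norm_rescale_sub_le hFd hDF hF0 (ε * z) x
  have htaylor := norm_sub_sub_fderiv_apply_le hFd hDF d x
  have hH := norm_fderiv_apply_self_sub_sub_le hF hDF x d
  have h₁ : ‖exp (-(ε * z)) • F (exp (ε * z) • x) - F x - (ε * z) • (fderiv ℝ F x x - F x)‖
      ≤ 2 * C₂ * exp M ^ 3 * B ^ 2 * M ^ 2 * ε ^ 2 := by
    have hc2 : (ε * z) ^ 2 ≤ M ^ 2 * ε ^ 2 := by
      rw [← sq_abs]; nlinarith [abs_nonneg (ε * z)]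
    calc _ ≤ 2 * C₂ * exp |ε * z| ^ 3 * ‖x‖ ^ 2 * (ε * z) ^ 2 := hrescale
      _ ≤ 2 * C₂ * exp M ^ 3 * B ^ 2 * (M ^ 2 * ε ^ 2) := by gcongr
      _ = 2 * C₂ * exp M ^ 3 * B ^ 2 * M ^ 2 * ε ^ 2 := by ring
  have h₂ : ‖F x - F d - fderiv ℝ F d (x - d)‖
      ≤ C₂ * (B + B_d + B₁) * ‖R‖ + C₂ * B₁ ^ 2 * ε ^ 2 := by
    have hsq : ‖x - d‖ ^ 2 ≤ (B + B_d + B₁) * ‖R‖ + B₁ ^ 2 * ε ^ 2 := by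
      have hεB₁ : 0 ≤ ε * B₁ := mul_nonneg hε0 hB₁
      calc ‖x - d‖ ^ 2 ≤ ‖x - d‖ * (‖R‖ + ε * B₁) := by rw [sq]; gcongr
        _ = ‖x - d‖ * ‖R‖ + ε * B₁ * ‖x - d‖ := by ring
        _ ≤ (B + B_d) * ‖R‖ + ε * B₁ * (‖R‖ + ε * B₁) := by gcongr
        _ ≤ (B + B_d + B₁) * ‖R‖ + B₁ ^ 2 * ε ^ 2 := by
            nlinarith [mul_le_mul_of_nonneg_right hε1 (mul_nonneg hB₁ (norm_nonneg R))]
    calc _ ≤ C₂ * ‖x - d‖ ^ 2 := htaylor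
      _ ≤ C₂ * ((B + B_d + B₁) * ‖R‖ + B₁ ^ 2 * ε ^ 2) := by gcongr
      _ = C₂ * (B + B_d + B₁) * ‖R‖ + C₂ * B₁ ^ 2 * ε ^ 2 := by ring
  have h₃ : ‖(ε * z) • ((fderiv ℝ F x x - F x) - (fderiv ℝ F d d - F d))‖
      ≤ M * (2 * C₁ + C₂ * B_d) * ‖R‖ + M * (2 * C₁ + C₂ * B_d) * B₁ * ε ^ 2 := by
    have hL₀ : 0 ≤ 2 * (C₁ : ℝ) + C₂ * B_d :=
      add_nonneg (by positivity) (mul_nonneg C₂.2 ((norm_nonneg d).trans hd))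
    have hL : 0 ≤ M * (2 * C₁ + C₂ * B_d) := mul_nonneg hM hL₀
    calc _ ≤ (ε * M) * ((2 * C₁ + C₂ * B_d) * (‖R‖ + ε * B₁)) := by
          rw [norm_smul, Real.norm_eq_abs]
          gcongr
          refine hH.trans ?_
          gcongr
      _ ≤ _ := by nlinarith [mul_nonneg hL (norm_nonneg R)]
  calc _ ≤ _ := norm_add₃_le
    _ ≤ _ := add_le_add (add_le_add h₁ h₂) h₃
    _ = _ := by ring

theorem exists_norm_perturbedField_sub_expansion_le (hFd : Differentiable ℝ F)
    (hF : LipschitzWith C₁ F) (hDF : LipschitzWith C₂ (fderiv ℝ F)) (hF0 : F 0 = 0)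
    {B B_d B₁ : ℝ} (hM : 0 ≤ M) (hB : 0 ≤ B) (hB_d : 0 ≤ B_d) (hB₁ : 0 ≤ B₁) :
    ∃ K δ : ℝ, 0 ≤ K ∧ 0 ≤ δ ∧ ∀ ε ∈ Icc (0 : ℝ) 1, ∀ (z : ℝ) (x d p : E),
      |z| ≤ M → ‖x‖ ≤ B → ‖d‖ ≤ B_d → ‖p‖ ≤ B₁ →
      ‖A x + (ε * z) • x + exp (-(ε * z)) • F (exp (ε * z) • x) - (A d + F d)
          - ε • (A p + fderiv ℝ F d p + z • (d - F d + fderiv ℝ F d d))‖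
        ≤ K * ‖x - d - ε • p‖ + δ * ε ^ 2 := by
  lift M to ℝ≥0 using hM
  lift B to ℝ≥0 using hB
  lift B_d to ℝ≥0 using hB_d
  lift B₁ to ℝ≥0 using hB₁
  refine ⟨‖A‖ + M + C₁ + (C₂ * (B + B_d + B₁) + M * (2 * C₁ + C₂ * B_d)),
    M * B₁ + (2 * C₂ * exp M ^ 3 * B ^ 2 * M ^ 2 + C₂ * B₁ ^ 2 + M * (2 * C₁ + C₂ * B_d) * B₁),
    by positivity, by positivity, fun ε hε z x d p hz hx hd hp => ?_⟩
  rw [perturbedField_sub_expansion_eq]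
  refine (norm_add_le _ _).trans ((add_le_add (norm_linearPart_le A hF hε hz hp d _)
    (norm_nonlinearPart_le hFd hF hDF hF0 hε hz hx hd hp)).trans_eq ?_)
  ring

end Expansion

theorem approx_solution_first_order_general
    {n : ℕ} (A : EuclideanSpace ℝ (Fin n) →L[ℝ] EuclideanSpace ℝ (Fin n))
    (Z : ℝ → ℝ) (hZ : Continuous Z)
    (F : EuclideanSpace ℝ (Fin n) → EuclideanSpace ℝ (Fin n))
    (hF : ContDiff ℝ 2 F) (hF0 : F 0 = 0)
    (hDF : ∃ C : ℝ, ∀ x, ‖fderiv ℝ F x‖ ≤ C)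
    (hD2F : ∃ C : ℝ, ∀ x, ‖fderiv ℝ (fderiv ℝ F) x‖ ≤ C)
    (Φ0 : EuclideanSpace ℝ (Fin n))
    (T : ℝ)
    (Φ : ℝ → ℝ → EuclideanSpace ℝ (Fin n))
    (hΦinit : ∀ ε ∈ Set.Icc (0:ℝ) 1, Φ ε 0 = Φ0)
    (hΦ : ∀ ε ∈ Set.Icc (0:ℝ) 1, ∀ t ∈ Set.Icc (0:ℝ) T,
      HasDerivAt (Φ ε)
        (A (Φ ε t) + (ε * Z t) • Φ ε t
          + Real.exp (-(ε * Z t)) • F (Real.exp (ε * Z t) • Φ ε t)) t)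
    (Φd : ℝ → EuclideanSpace ℝ (Fin n))
    (hΦdinit : Φd 0 = Φ0)
    (hΦd : ∀ t ∈ Set.Icc (0:ℝ) T,
      HasDerivAt Φd (A (Φd t) + F (Φd t)) t)
    (Φ1 : ℝ → EuclideanSpace ℝ (Fin n))
    (hΦ1init : Φ1 0 = 0)
    (hΦ1 : ∀ t ∈ Set.Icc (0:ℝ) T,
      HasDerivAt Φ1
        (A (Φ1 t) + (fderiv ℝ F (Φd t)) (Φ1 t)
          + Z t • (Φd t - F (Φd t) + (fderiv ℝ F (Φd t)) (Φd t))) t) :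
    ∃ C : ℝ, ∀ ε ∈ Set.Icc (0:ℝ) 1, ∀ t ∈ Set.Icc (0:ℝ) T,
      ‖Φ ε t - Φd t - ε • Φ1 t‖ ≤ C * ε ^ 2 := by
  obtain ⟨C₁, hC₁⟩ := hDF
  obtain ⟨C₂, hC₂⟩ := hD2F
  have hFd : Differentiable ℝ F := hF.differentiable (by norm_num)
  have hFL := lipschitzWith_toNNReal_of_norm_fderiv_le hFd hC₁
  have hDFL := lipschitzWith_toNNReal_of_norm_fderiv_le
    ((hF.fderiv_right (m := 1) (by norm_num)).differentiable (by norm_num)) hC₂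
  obtain ⟨M, hM⟩ :=
    isCompact_Icc.exists_nnreal_bound_of_continuousOn (s := Icc 0 T) hZ.continuousOn
  obtain ⟨B_d, hB_d⟩ := exists_nnreal_bound_of_hasDerivAt_Icc hΦd
  obtain ⟨B₁, hB₁⟩ := exists_nnreal_bound_of_hasDerivAt_Icc hΦ1
  set B := ‖Φ0‖ * exp ((‖A‖ + M + C₁.toNNReal) * T)
  have hΦB : ∀ ε ∈ Icc (0 : ℝ) 1, ∀ t ∈ Icc 0 T, ‖Φ ε t‖ ≤ B := fun ε hε t ht => by
    simpa only [hΦinit ε hε, zero_mul, add_zero] using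
      norm_le_of_norm_deriv_le_mul_add (by positivity) le_rfl (hΦ ε hε)
        (fun s hs => (norm_perturbedField_le A hFL hF0 hε (hM s hs) _).trans_eq (add_zero _).symm) ht
  obtain ⟨K, δ, hK, hδ, hres⟩ := exists_norm_perturbedField_sub_expansion_le A hFd hFL hDFL hF0
    M.2 (by positivity : 0 ≤ B) B_d.2 B₁.2
  refine ⟨δ * T * exp (K * T), fun ε hε t ht => ?_⟩
  have hR := norm_le_of_norm_deriv_le_mul_add hK (mul_nonneg hδ (sq_nonneg ε))
    (fun s hs => ((hΦ ε hε s hs).sub (hΦd s hs)).sub ((hΦ1 s hs).const_smul ε))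
    (fun s hs => hres ε hε (Z s) _ _ _ (hM s hs) (hΦB ε hε s hs) (hB_d s hs) (hB₁ s hs)) ht
  simp only [Pi.sub_apply, Pi.smul_apply, hΦinit ε hε, hΦdinit, hΦ1init, sub_self, smul_zero,
    norm_zero, zero_add] at hR
  exact hR.trans_eq (by ring)

/-- First-order asymptotic expansion in the noise intensity `ε` of the solution
`Φ ε` of the random evolutionary equation
`Φ' = A Φ + ε Z(t) Φ + e^{-εZ(t)} F(e^{εZ(t)} Φ)`, around the deterministic
solution `Φd` with first-order correction `Φ1`. -/
theorem approx_solution_first_order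
    {n : ℕ} (A : EuclideanSpace ℝ (Fin n) →L[ℝ] EuclideanSpace ℝ (Fin n))
    (Z : ℝ → ℝ) (hZ : Continuous Z)
    (F : EuclideanSpace ℝ (Fin n) → EuclideanSpace ℝ (Fin n))
    (hF : ContDiff ℝ 2 F) (hF0 : F 0 = 0)
    (hDF : ∃ C : ℝ, ∀ x, ‖fderiv ℝ F x‖ ≤ C)
    (hD2F : ∃ C : ℝ, ∀ x, ‖fderiv ℝ (fderiv ℝ F) x‖ ≤ C)
    (Φ0 : EuclideanSpace ℝ (Fin n))
    (T : ℝ) (hT : 0 < T)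
    (Φ : ℝ → ℝ → EuclideanSpace ℝ (Fin n))
    (hΦinit : ∀ ε ∈ Set.Icc (0:ℝ) 1, Φ ε 0 = Φ0)
    (hΦ : ∀ ε ∈ Set.Icc (0:ℝ) 1, ∀ t ∈ Set.Icc (0:ℝ) T,
      HasDerivAt (Φ ε)
        (A (Φ ε t) + (ε * Z t) • Φ ε t
          + Real.exp (-(ε * Z t)) • F (Real.exp (ε * Z t) • Φ ε t)) t)
    (Φd : ℝ → EuclideanSpace ℝ (Fin n))
    (hΦdinit : Φd 0 = Φ0)
    (hΦd : ∀ t ∈ Set.Icc (0:ℝ) T,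
      HasDerivAt Φd (A (Φd t) + F (Φd t)) t)
    (Φ1 : ℝ → EuclideanSpace ℝ (Fin n))
    (hΦ1init : Φ1 0 = 0)
    (hΦ1 : ∀ t ∈ Set.Icc (0:ℝ) T,
      HasDerivAt Φ1
        (A (Φ1 t) + (fderiv ℝ F (Φd t)) (Φ1 t)
          + Z t • (Φd t - F (Φd t) + (fderiv ℝ F (Φd t)) (Φd t))) t) :
    ∃ C : ℝ, ∀ ε ∈ Set.Icc (0:ℝ) 1, ∀ t ∈ Set.Icc (0:ℝ) T,
      ‖Φ ε t - Φd t - ε • Φ1 t‖ ≤ C * ε ^ 2 :=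
  approx_solution_first_order_general A Z hZ F hF hF0 hDF hD2F Φ0 T Φ hΦinit hΦ Φd hΦdinit hΦd Φ1
    hΦ1init hΦ1
end

section
/- Let A be a continuous linear map on ℝⁿ, Z : ℝ → ℝ continuous, and F : ℝⁿ → ℝⁿ twice continuously differentiable with F(0) = 0 and with DF and D²F bounded. For ε ∈ [0,1] let Φ_ε solve Φ_ε' = AΦ_ε + εZ(t)Φ_ε + e^{−εZ(t)}F(e^{εZ(t)}Φ_ε), Φ_ε(0) = Φ⁰, and let ψ_ε solve ψ_ε' = Aψ_ε + εZ(t)ψ_ε + e^{−εZ(t)}[F(e^{εZ(t)}(ψ_ε + Φ_ε)) − F(e^{εZ(t)}Φ_ε)], with initial value ψ_ε(0) = ψ₀ + ε ψ₁ for fixed ψ₀, ψ₁ ∈ ℝⁿ. Let Φ⁽ᵈ⁾, Φ⁽¹⁾ be as in the zeroth and first-order equations for Φ (Φ⁽ᵈ⁾' = AΦ⁽ᵈ⁾ + F(Φ⁽ᵈ⁾), Φ⁽ᵈ⁾(0)=Φ⁰; Φ⁽¹⁾' = (A + DF(Φ⁽ᵈ⁾))Φ⁽¹⁾ + Z(t)[Φ⁽ᵈ⁾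 − F(Φ⁽ᵈ⁾) + DF(Φ⁽ᵈ⁾)Φ⁽ᵈ⁾], Φ⁽¹⁾(0)=0). Let ψ⁽ᵈ⁾ solve ψ⁽ᵈ⁾' = Aψ⁽ᵈ⁾ + F(ψ⁽ᵈ⁾ + Φ⁽ᵈ⁾) − F(Φ⁽ᵈ⁾), ψ⁽ᵈ⁾(0) = ψ₀, and let ψ⁽¹⁾ solve ψ⁽¹⁾' = (A + DF(ψ⁽ᵈ⁾ + Φ⁽ᵈ⁾))ψ⁽¹⁾ + λ̃(t), ψ⁽¹⁾(0) = ψ₁, where λ̃(t) = Z(t)ψ⁽ᵈ⁾(t) + Z(t)[DF(ψ⁽ᵈ⁾(t)+Φ⁽ᵈ⁾(t))(ψ⁽ᵈ⁾(t)+Φ⁽ᵈ⁾(t)) − F(ψ⁽ᵈ⁾(t)+Φ⁽ᵈ⁾(t))] + DF(ψ⁽ᵈ⁾(t)+Φ⁽ᵈ⁾(t))Φ⁽¹⁾(t) − Z(t)[DF(Φ⁽ᵈ⁾(t))Φ⁽ᵈ⁾(t) − F(Φ⁽ᵈ⁾(t))] − DF(Φ⁽ᵈ⁾(t))Φ⁽¹⁾(t).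 Then for every T > 0 there is a constant C such that sup_{0 ≤ t ≤ T} ‖ψ_ε(t) − ψ⁽ᵈ⁾(t) − ε ψ⁽¹⁾(t)‖ ≤ C ε² for all ε ∈ [0,1]. -/
/-!
Put `u_ε = ψ_ε + Φ_ε`. It solves the same equation as `Φ_ε`, now with initial value
`(ψ₀ + Φ⁰) + ε ψ₁`, and `ψ⁽ᵈ⁾ + Φ⁽ᵈ⁾`, `ψ⁽¹⁾ + Φ⁽¹⁾` solve the zeroth- and first-order equations
for `u`. So it is enough to show that every solution `x_ε` of
`x' = A x + ε Z x + e^{-εZ} F(e^{εZ} x)`, `x_ε(0) = x⁰ + ε x¹`, satisfies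
`x_ε = x⁽ᵈ⁾ + ε x⁽¹⁾ + O(ε²)`, and to subtract the expansions of `u_ε` and `Φ_ε`.

For a single equation this is Grönwall three times: `x_ε` is bounded uniformly in `ε`, then
`x_ε - x⁽ᵈ⁾ = O(ε)`, and finally `e = x_ε - x⁽ᵈ⁾ - ε x⁽¹⁾` solves
`e' = (A + DF(x⁽ᵈ⁾)) e + O(ε²)`. The `O(ε²)` collects second-order Taylor remainders of `F` in
`x` and of `a ↦ e^{-a} F(e^a x)` in `a`; the latter is controlled by `D²F` because differentiating
in `a` twice only produces `DF` and `D²F` evaluated at `e^a x`.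
-/

open Set

variable {E : Type*} [NormedAddCommGroup E] [NormedSpace ℝ E]

theorem gronwallBound_mul_mul (c δ K η x : ℝ) :
    gronwallBound (c * δ) K (c * η) x = c * gronwallBound δ K η x := by
  unfold gronwallBound
  split_ifs <;> ring

theorem norm_le_gronwallBound_of_hasDerivAt {f f' : ℝ → E} {δ K η T t : ℝ} (hK : 0 ≤ K)
    (hη : 0 ≤ η) (hf : ∀ s ∈ Icc 0 T, HasDerivAt f (f' s) s) (h0 : ‖f 0‖ ≤ δ)
    (bound : ∀ s ∈ Icc 0 T, ‖f' s‖ ≤ K * ‖f s‖ + η) (ht : t ∈ Icc 0 T) :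
    ‖f t‖ ≤ gronwallBound δ K η T :=
  calc ‖f t‖ ≤ gronwallBound δ K η (t - 0) :=
        norm_le_gronwallBound_of_norm_deriv_right_le
          (fun s hs => (hf s hs).continuousAt.continuousWithinAt)
          (fun s hs => (hf s (Ico_subset_Icc_self hs)).hasDerivWithinAt) h0
          (fun s hs => bound s (Ico_subset_Icc_self hs)) t ht
    _ ≤ gronwallBound δ K η T :=
        gronwallBound_mono ((norm_nonneg _).trans h0) hη hK (by linarith [ht.2])

theorem norm_sub_sub_smul_le_of_norm_deriv2_le {g g' g'' : ℝ → E} {R C a : ℝ}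
    (hg : ∀ s, HasDerivAt g (g' s) s) (hg' : ∀ s, HasDerivAt g' (g'' s) s)
    (bound : ∀ s ∈ Icc (-R) R, ‖g'' s‖ ≤ C) (ha : |a| ≤ R) :
    ‖g a - g 0 - a • g' 0‖ ≤ C * a ^ 2 := by
  have h0 : (0 : ℝ) ∈ Icc (-|a|) |a| := by simp
  have hsub : Icc (-|a|) |a| ⊆ Icc (-R) R := Icc_subset_Icc (neg_le_neg ha) ha
  have hC : 0 ≤ C := (norm_nonneg _).trans (bound 0 (hsub h0))
  have hg'_sub : ∀ s ∈ Icc (-|a|) |a|, ‖g' s - g' 0‖ ≤ C * |a| := fun s hs => by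
    calc ‖g' s - g' 0‖ ≤ C * ‖s - 0‖ := by
          simpa using (convex_Icc (-R) R).norm_image_sub_le_of_norm_hasDerivWithin_le
            (fun u _ => (hg' u).hasDerivWithinAt) bound (hsub h0) (hsub hs)
      _ ≤ C * |a| := by gcongr; simpa using abs_le.2 hs
  have := (convex_Icc (-|a|) |a|).norm_image_sub_le_of_norm_hasDerivWithin_le
    (f := fun s => g s - s • g' 0)
    (fun s _ => ((hg s).sub ((hasDerivAt_id s).smul_const (g' 0))).hasDerivWithinAt)
    (by simpa using hg'_sub) h0 ⟨neg_abs_le a, le_abs_self a⟩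
  rw [sub_right_comm]
  simpa [sq, mul_assoc] using this

/-- The paper's `G(ω, u) = e^{-z(ω)} F(e^{z(ω)} u)`, with `z(ω)` replaced by a real `a`. -/
noncomputable def expConj (F : E → E) (a : ℝ) (x : E) : E := Real.exp (-a) • F (Real.exp a • x)

/-- Named after Euler's relation `DF(x) x = F(x)`, which characterises positively
1-homogeneous `F`. -/
noncomputable def eulerDefect (F : E → E) (x : E) : E := fderiv ℝ F x x - F x

@[simp] theorem expConj_zero (F : E → E) (x : E) : expConj F 0 x = F x := by simp [expConj]

theorem hasDerivAt_expConj {F : E → E} (hF : Differentiable ℝ F) (x : E) (a : ℝ) :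
    HasDerivAt (fun a => expConj F a x) (expConj (eulerDefect F) a x) a := by
  have hu : HasDerivAt (fun a => Real.exp a • x) (Real.exp a • x) a :=
    (Real.hasDerivAt_exp a).smul_const x
  have := ((Real.hasDerivAt_exp (-a)).comp a (hasDerivAt_neg a)).smul
    ((hF _).hasFDerivAt.comp_hasDerivAt a hu)
  refine this.congr_deriv ?_
  simp only [Function.comp_apply, expConj, eulerDefect, smul_sub, map_smul, smul_smul,
    ← Real.exp_add]
  module

theorem norm_expConj_le {k : E → E} {c ρ a : ℝ} {x : E}
    (hk : ∀ y, ‖y‖ ≤ ρ → ‖k y‖ ≤ c * ‖y‖) (hx : Real.exp a * ‖x‖ ≤ ρ) :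
    ‖expConj k a x‖ ≤ c * ‖x‖ := by
  have hnorm : ‖Real.exp a • x‖ = Real.exp a * ‖x‖ := by
    rw [norm_smul, Real.norm_of_nonneg (Real.exp_pos a).le]
  calc ‖expConj k a x‖ = Real.exp (-a) * ‖k (Real.exp a • x)‖ := by
        rw [expConj, norm_smul, Real.norm_of_nonneg (Real.exp_pos _).le]
    _ ≤ Real.exp (-a) * (c * (Real.exp a * ‖x‖)) := by
        gcongr; rw [← hnorm]; exact hk _ (hnorm ▸ hx)
    _ = c * ‖x‖ := by rw [Real.exp_neg]; field_simp

section Nonlinearity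

variable {F : E → E} {L M : ℝ}

theorem norm_sub_le_of_norm_fderiv_le {G : Type*} [NormedAddCommGroup G] [NormedSpace ℝ G]
    {f : E → G} (hf : Differentiable ℝ f) (hL : ∀ y, ‖fderiv ℝ f y‖ ≤ L) (x y : E) :
    ‖f x - f y‖ ≤ L * ‖x - y‖ :=
  convex_univ.norm_image_sub_le_of_norm_fderiv_le (fun z _ => hf z) (fun z _ => hL z)
    trivial trivial

theorem norm_le_of_norm_fderiv_le (hF : Differentiable ℝ F) (hF0 : F 0 = 0)
    (hL : ∀ y, ‖fderiv ℝ F y‖ ≤ L) (x : E) : ‖F x‖ ≤ L * ‖x‖ := by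
  simpa [hF0] using norm_sub_le_of_norm_fderiv_le hF hL x 0

theorem norm_sub_sub_fderiv_le (hF : ContDiff ℝ 2 F)
    (hM : ∀ y, ‖fderiv ℝ (fderiv ℝ F) y‖ ≤ M) (x y : E) :
    ‖F y - F x - fderiv ℝ F x (y - x)‖ ≤ M * ‖y - x‖ ^ 2 := by
  have hDF : Differentiable ℝ (fderiv ℝ F) :=
    (hF.fderiv_right (m := 1) le_rfl).differentiable one_ne_zero
  have := (convex_closedBall x ‖y - x‖).norm_image_sub_le_of_norm_fderiv_le'
    (φ := fderiv ℝ F x) (fun z _ => hF.differentiable two_ne_zero z)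
    (fun z hz => (norm_sub_le_of_norm_fderiv_le hDF hM z x).trans
      (mul_le_mul_of_nonneg_left (mem_closedBall_iff_norm.1 hz) ((norm_nonneg _).trans (hM 0))))
    (Metric.mem_closedBall_self (norm_nonneg _)) (mem_closedBall_iff_norm.2 le_rfl)
  rwa [mul_assoc, ← sq] at this

theorem norm_eulerDefect_le (hF : Differentiable ℝ F) (hF0 : F 0 = 0)
    (hL : ∀ y, ‖fderiv ℝ F y‖ ≤ L) (x : E) : ‖eulerDefect F x‖ ≤ 2 * L * ‖x‖ :=
  calc ‖eulerDefect F x‖ ≤ ‖fderiv ℝ F x x‖ + ‖F x‖ := norm_sub_le _ _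
    _ ≤ L * ‖x‖ + L * ‖x‖ := by
        gcongr
        · exact (fderiv ℝ F x).le_of_opNorm_le (hL x) x
        · exact norm_le_of_norm_fderiv_le hF hF0 hL x
    _ = 2 * L * ‖x‖ := by ring

theorem hasFDerivAt_eulerDefect (hF : ContDiff ℝ 2 F) (x : E) :
    HasFDerivAt (eulerDefect F) ((fderiv ℝ (fderiv ℝ F) x).flip x) x := by
  have hDF : Differentiable ℝ (fderiv ℝ F) :=
    (hF.fderiv_right (m := 1) le_rfl).differentiable one_ne_zero
  have := ((hDF x).hasFDerivAt.clm_apply (hasFDerivAt_id x)).sub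
    (hF.differentiable two_ne_zero x).hasFDerivAt
  refine this.congr_fderiv ?_
  ext v
  simp

theorem norm_eulerDefect_sub_le (hF : ContDiff ℝ 2 F)
    (hM : ∀ y, ‖fderiv ℝ (fderiv ℝ F) y‖ ≤ M) {ρ : ℝ} {x y : E} (hx : ‖x‖ ≤ ρ) (hy : ‖y‖ ≤ ρ) :
    ‖eulerDefect F x - eulerDefect F y‖ ≤ M * ρ * ‖x - y‖ :=
  (convex_closedBall (0 : E) ρ).norm_image_sub_le_of_norm_hasFDerivWithin_le
    (fun z _ => (hasFDerivAt_eulerDefect hF z).hasFDerivWithinAt)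
    (fun z hz => by
      refine ((fderiv ℝ (fderiv ℝ F) z).flip.le_opNorm z).trans ?_
      rw [ContinuousLinearMap.opNorm_flip]
      exact mul_le_mul (hM z) (mem_closedBall_zero_iff.1 hz) (norm_nonneg _)
        ((norm_nonneg _).trans (hM z)))
    (mem_closedBall_zero_iff.2 hy) (mem_closedBall_zero_iff.2 hx)

theorem norm_eulerDefect_eulerDefect_le (hF : ContDiff ℝ 2 F) (hF0 : F 0 = 0)
    (hL : ∀ y, ‖fderiv ℝ F y‖ ≤ L) (hM : ∀ y, ‖fderiv ℝ (fderiv ℝ F) y‖ ≤ M) (x : E) :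
    ‖eulerDefect (eulerDefect F) x‖ ≤ (M * ‖x‖ + 2 * L) * ‖x‖ := by
  have hD2 : ‖fderiv ℝ (fderiv ℝ F) x x x‖ ≤ M * ‖x‖ * ‖x‖ :=
    ((fderiv ℝ (fderiv ℝ F) x).le_opNorm₂ x x).trans (by gcongr; exact hM x)
  calc ‖eulerDefect (eulerDefect F) x‖
        = ‖fderiv ℝ (fderiv ℝ F) x x x - eulerDefect F x‖ := by
          rw [eulerDefect, (hasFDerivAt_eulerDefect hF x).fderiv]; rfl
    _ ≤ M * ‖x‖ * ‖x‖ + 2 * L * ‖x‖ :=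
        (norm_sub_le _ _).trans (add_le_add hD2 (norm_eulerDefect_le
          (hF.differentiable two_ne_zero) hF0 hL x))
    _ = (M * ‖x‖ + 2 * L) * ‖x‖ := by ring

theorem norm_expConj_sub_le (hF : Differentiable ℝ F) (hF0 : F 0 = 0)
    (hL : ∀ y, ‖fderiv ℝ F y‖ ≤ L) (a : ℝ) (x : E) :
    ‖expConj F a x - F x‖ ≤ 2 * L * ‖x‖ * |a| := by
  simpa [Real.norm_eq_abs] using convex_univ.norm_image_sub_le_of_norm_hasDerivWithin_le
    (fun s _ => (hasDerivAt_expConj hF x s).hasDerivWithinAt)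
    (fun s _ => norm_expConj_le (fun y _ => norm_eulerDefect_le hF hF0 hL y) le_rfl)
    (mem_univ 0) (mem_univ a)

theorem norm_expConj_sub_sub_le (hF : ContDiff ℝ 2 F) (hF0 : F 0 = 0)
    (hL : ∀ y, ‖fderiv ℝ F y‖ ≤ L) (hM : ∀ y, ‖fderiv ℝ (fderiv ℝ F) y‖ ≤ M) {ρ B a : ℝ}
    {x : E} (ha : |a| ≤ ρ) (hx : ‖x‖ ≤ B) :
    ‖expConj F a x - F x - a • eulerDefect F x‖ ≤ (M * Real.exp ρ * B + 2 * L) * B * a ^ 2 := by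
  have hM0 : 0 ≤ M := (norm_nonneg _).trans (hM 0)
  have hL0 : 0 ≤ L := (norm_nonneg _).trans (hL 0)
  have hB0 : 0 ≤ B := (norm_nonneg _).trans hx
  have hdiff : Differentiable ℝ (eulerDefect F) :=
    fun y => (hasFDerivAt_eulerDefect hF y).differentiableAt
  have bound : ∀ s ∈ Icc (-ρ) ρ, ‖expConj (eulerDefect (eulerDefect F)) s x‖
      ≤ (M * Real.exp ρ * B + 2 * L) * B := fun s hs => by
    refine (norm_expConj_le (ρ := Real.exp ρ * B) (fun y hy => ?_) ?_).trans (by gcongr)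
    · refine (norm_eulerDefect_eulerDefect_le hF hF0 hL hM y).trans ?_
      calc (M * ‖y‖ + 2 * L) * ‖y‖ ≤ (M * (Real.exp ρ * B) + 2 * L) * ‖y‖ := by gcongr
        _ = (M * Real.exp ρ * B + 2 * L) * ‖y‖ := by ring
    · gcongr; exact hs.2
  simpa using norm_sub_sub_smul_le_of_norm_deriv2_le
    (hasDerivAt_expConj (hF.differentiable two_ne_zero) x)
    (hasDerivAt_expConj hdiff x) bound ha

end Nonlinearity

section Expansion

variable {A : E →L[ℝ] E} {Z : ℝ → ℝ} {F : E → E} {L M R T : ℝ}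

noncomputable def perturbedField (A : E →L[ℝ] E) (Z : ℝ → ℝ) (F : E → E) (ε t : ℝ) (x : E) :
    E :=
  A x + (ε * Z t) • x + expConj F (ε * Z t) x

structure SolvesExpansionEquations (A : E →L[ℝ] E) (Z : ℝ → ℝ) (F : E → E) (T : ℝ)
    (x : ℝ → ℝ → E) (xd x1 : ℝ → E) : Prop where
  init : ∀ ε ∈ Icc (0 : ℝ) 1, x ε 0 = xd 0 + ε • x1 0
  hasDerivAt : ∀ ε ∈ Icc (0 : ℝ) 1, ∀ t ∈ Icc 0 T,
    HasDerivAt (x ε) (perturbedField A Z F ε t (x ε t)) t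
  hasDerivAt_zero : ∀ t ∈ Icc 0 T, HasDerivAt xd (A (xd t) + F (xd t)) t
  hasDerivAt_one : ∀ t ∈ Icc 0 T, HasDerivAt x1
    (A (x1 t) + fderiv ℝ F (xd t) (x1 t) + Z t • (xd t - F (xd t) + fderiv ℝ F (xd t) (xd t))) t

noncomputable def expansionRemainder (F : E → E) (a : ℝ) (y z : E) : E :=
  a • (y - z) + (expConj F a y - F y - a • eulerDefect F y)
    + a • (eulerDefect F y - eulerDefect F z) + (F y - F z - fderiv ℝ F z (y - z))

theorem perturbedField_sub_sub (ε t : ℝ) (y z w : E) :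
    perturbedField A Z F ε t y - (A z + F z)
        - ε • (A w + fderiv ℝ F z w + Z t • (z - F z + fderiv ℝ F z z))
      = A (y - z - ε • w) + fderiv ℝ F z (y - z - ε • w)
        + expansionRemainder F (ε * Z t) y z := by
  simp only [perturbedField, expansionRemainder, eulerDefect, map_sub, map_smul, smul_sub,
    smul_add, smul_smul]
  module

theorem norm_expansionRemainder_le (hF : ContDiff ℝ 2 F) (hF0 : F 0 = 0)
    (hL : ∀ y, ‖fderiv ℝ F y‖ ≤ L) (hM : ∀ y, ‖fderiv ℝ (fderiv ℝ F) y‖ ≤ M) {ρ B a : ℝ}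
    {y z : E} (ha : |a| ≤ ρ) (hy : ‖y‖ ≤ B) (hz : ‖z‖ ≤ B) :
    ‖expansionRemainder F a y z‖ ≤ ρ * (1 + M * B) * ‖y - z‖
      + (M * Real.exp ρ * B + 2 * L) * B * ρ ^ 2 + M * ‖y - z‖ ^ 2 := by
  have hM0 : 0 ≤ M := (norm_nonneg _).trans (hM 0)
  have hL0 : 0 ≤ L := (norm_nonneg _).trans (hL 0)
  have hB0 : 0 ≤ B := (norm_nonneg _).trans hy
  have hρ : 0 ≤ ρ := (abs_nonneg a).trans ha
  have ha2 : a ^ 2 ≤ ρ ^ 2 := by rw [← sq_abs]; gcongr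
  calc ‖expansionRemainder F a y z‖
        ≤ ‖a • (y - z)‖ + ‖expConj F a y - F y - a • eulerDefect F y‖
          + ‖a • (eulerDefect F y - eulerDefect F z)‖
          + ‖F y - F z - fderiv ℝ F z (y - z)‖ := norm_add₄_le
    _ ≤ ρ * ‖y - z‖ + (M * Real.exp ρ * B + 2 * L) * B * ρ ^ 2 + ρ * (M * B * ‖y - z‖)
          + M * ‖y - z‖ ^ 2 := by
        simp only [norm_smul, Real.norm_eq_abs]
        gcongr
        · exact (norm_expConj_sub_sub_le hF hF0 hL hM ha hy).trans (by gcongr)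
        · exact norm_eulerDefect_sub_le hF hM hy hz
        · exact norm_sub_sub_fderiv_le hF hM z y
    _ = _ := by ring

namespace SolvesExpansionEquations

variable {x : ℝ → ℝ → E} {xd x1 : ℝ → E}

theorem exists_norm_le (h : SolvesExpansionEquations A Z F T x xd x1)
    (hF : Differentiable ℝ F) (hF0 : F 0 = 0) (hL : ∀ y, ‖fderiv ℝ F y‖ ≤ L)
    (hZ : ∀ t ∈ Icc 0 T, |Z t| ≤ R) :
    ∃ B, ∀ ε ∈ Icc (0 : ℝ) 1, ∀ t ∈ Icc 0 T, ‖x ε t‖ ≤ B := by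
  refine ⟨gronwallBound (‖xd 0‖ + ‖x1 0‖) (‖A‖ + R + L) 0 T, fun ε hε t ht => ?_⟩
  have hR : 0 ≤ R := (abs_nonneg _).trans (hZ 0 ⟨le_rfl, ht.1.trans ht.2⟩)
  have hL0 : 0 ≤ L := (norm_nonneg _).trans (hL 0)
  refine norm_le_gronwallBound_of_hasDerivAt (by positivity) le_rfl (h.hasDerivAt ε hε) ?_
    (fun s hs => ?_) ht
  · rw [h.init ε hε]
    refine (norm_add_le _ _).trans (add_le_add_right ?_ _)
    rw [norm_smul, Real.norm_of_nonneg hε.1]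
    exact mul_le_of_le_one_left (norm_nonneg _) hε.2
  · have ha : |ε * Z s| ≤ R := by
      rw [abs_mul, abs_of_nonneg hε.1]
      nlinarith [hZ s hs, abs_nonneg (Z s), hε.2]
    calc ‖perturbedField A Z F ε s (x ε s)‖
          ≤ ‖A (x ε s)‖ + ‖(ε * Z s) • x ε s‖ + ‖expConj F (ε * Z s) (x ε s)‖ := norm_add₃_le
      _ ≤ ‖A‖ * ‖x ε s‖ + R * ‖x ε s‖ + L * ‖x ε s‖ := by
          rw [norm_smul, Real.norm_eq_abs]
          gcongr
          · exact A.le_opNorm _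
          · exact norm_expConj_le (fun y _ => norm_le_of_norm_fderiv_le hF hF0 hL y) le_rfl
      _ = (‖A‖ + R + L) * ‖x ε s‖ + 0 := by ring

theorem exists_norm_sub_le_mul (h : SolvesExpansionEquations A Z F T x xd x1)
    (hF : Differentiable ℝ F) (hF0 : F 0 = 0) (hL : ∀ y, ‖fderiv ℝ F y‖ ≤ L)
    (hZ : ∀ t ∈ Icc 0 T, |Z t| ≤ R) :
    ∃ C, ∀ ε ∈ Icc (0 : ℝ) 1, ∀ t ∈ Icc 0 T, ‖x ε t - xd t‖ ≤ C * ε := by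
  obtain ⟨B, hB⟩ := h.exists_norm_le hF hF0 hL hZ
  refine ⟨gronwallBound ‖x1 0‖ (‖A‖ + L) (R * B + 2 * L * B * R) T, fun ε hε t ht => ?_⟩
  have hε0 : 0 ≤ ε := hε.1
  have h0 : (0 : ℝ) ∈ Icc 0 T := ⟨le_rfl, ht.1.trans ht.2⟩
  have hR : 0 ≤ R := (abs_nonneg _).trans (hZ 0 h0)
  have hB0 : 0 ≤ B := (norm_nonneg _).trans (hB ε hε 0 h0)
  have hL0 : 0 ≤ L := (norm_nonneg _).trans (hL 0)
  rw [mul_comm, ← gronwallBound_mul_mul]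
  refine norm_le_gronwallBound_of_hasDerivAt (by positivity) (by positivity)
    (fun s hs => (h.hasDerivAt ε hε s hs).sub (h.hasDerivAt_zero s hs)) ?_ (fun s hs => ?_) ht
  · rw [Pi.sub_apply, h.init ε hε, add_sub_cancel_left, norm_smul, Real.norm_of_nonneg hε.1]
  · have ha : |ε * Z s| ≤ ε * R := by
      rw [abs_mul, abs_of_nonneg hε.1]
      exact mul_le_mul_of_nonneg_left (hZ s hs) hε.1
    have hsplit : perturbedField A Z F ε s (x ε s) - (A (xd s) + F (xd s))
        = A (x ε s - xd s) + (F (x ε s) - F (xd s))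
          + ((ε * Z s) • x ε s + (expConj F (ε * Z s) (x ε s) - F (x ε s))) := by
      simp only [perturbedField, map_sub]
      abel
    calc ‖perturbedField A Z F ε s (x ε s) - (A (xd s) + F (xd s))‖
          ≤ ‖A (x ε s - xd s)‖ + ‖F (x ε s) - F (xd s)‖
            + (‖(ε * Z s) • x ε s‖ + ‖expConj F (ε * Z s) (x ε s) - F (x ε s)‖) := by
          rw [hsplit]
          exact norm_add₃_le.trans (add_le_add_right (norm_add_le _ _) _)
      _ ≤ ‖A‖ * ‖x ε s - xd s‖ + L * ‖x ε s - xd s‖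
            + (ε * R * B + 2 * L * B * (ε * R)) := by
          rw [norm_smul, Real.norm_eq_abs]
          gcongr
          · exact A.le_opNorm _
          · exact norm_sub_le_of_norm_fderiv_le hF hL _ _
          · exact hB ε hε s hs
          · exact (norm_expConj_sub_le hF hF0 hL _ _).trans (by gcongr; exact hB ε hε s hs)
      _ = (‖A‖ + L) * ‖x ε s - xd s‖ + ε * (R * B + 2 * L * B * R) := by ring

theorem exists_norm_sub_sub_smul_le_mul_sq (h : SolvesExpansionEquations A Z F T x xd x1)
    (hZ : Continuous Z) (hF : ContDiff ℝ 2 F) (hF0 : F 0 = 0) (hL : ∀ y, ‖fderiv ℝ F y‖ ≤ L)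
    (hM : ∀ y, ‖fderiv ℝ (fderiv ℝ F) y‖ ≤ M) :
    ∃ C, ∀ ε ∈ Icc (0 : ℝ) 1, ∀ t ∈ Icc 0 T, ‖x ε t - xd t - ε • x1 t‖ ≤ C * ε ^ 2 := by
  have hF1 : Differentiable ℝ F := hF.differentiable two_ne_zero
  obtain ⟨R, hR⟩ := isCompact_Icc.exists_bound_of_continuousOn (hZ.continuousOn (s := Icc 0 T))
  simp only [Real.norm_eq_abs] at hR
  obtain ⟨B, hB⟩ := h.exists_norm_le hF1 hF0 hL hR
  obtain ⟨Bd, hBd⟩ := isCompact_Icc.exists_bound_of_continuousOn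
    (fun t ht => (h.hasDerivAt_zero t ht).continuousAt.continuousWithinAt)
  obtain ⟨C1, hC1⟩ := h.exists_norm_sub_le_mul hF1 hF0 hL hR
  set B' := max B Bd
  set η := R * (1 + M * B') * C1 + (M * Real.exp R * B' + 2 * L) * B' * R ^ 2 + M * C1 ^ 2
  refine ⟨gronwallBound 0 (‖A‖ + L) η T, fun ε hε t ht => ?_⟩
  have hε0 : 0 ≤ ε := hε.1
  have h0 : (0 : ℝ) ∈ Icc 0 T := ⟨le_rfl, ht.1.trans ht.2⟩
  have hR0 : 0 ≤ R := (abs_nonneg _).trans (hR 0 h0)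
  have hB0 : 0 ≤ B' := le_max_of_le_left ((norm_nonneg _).trans (hB ε hε 0 h0))
  have hC10 : 0 ≤ C1 := by simpa using (norm_nonneg _).trans (hC1 1 ⟨zero_le_one, le_rfl⟩ 0 h0)
  have hL0 : 0 ≤ L := (norm_nonneg _).trans (hL 0)
  have hM0 : 0 ≤ M := (norm_nonneg _).trans (hM 0)
  have hrem : ∀ s ∈ Icc 0 T,
      ‖expansionRemainder F (ε * Z s) (x ε s) (xd s)‖ ≤ ε ^ 2 * η := fun s hs => by
    have ha : |ε * Z s| ≤ ε * R := by
      rw [abs_mul, abs_of_nonneg hε.1]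
      exact mul_le_mul_of_nonneg_left (hR s hs) hε.1
    refine (norm_expansionRemainder_le hF hF0 hL hM ha ((hB ε hε s hs).trans (le_max_left _ _))
      ((hBd s hs).trans (le_max_right _ _))).trans ?_
    have hεR : Real.exp (ε * R) ≤ Real.exp R := Real.exp_le_exp.2 (by nlinarith [hε.2])
    have hd := hC1 ε hε s hs
    calc ε * R * (1 + M * B') * ‖x ε s - xd s‖
          + (M * Real.exp (ε * R) * B' + 2 * L) * B' * (ε * R) ^ 2 + M * ‖x ε s - xd s‖ ^ 2
        ≤ ε * R * (1 + M * B') * (C1 * ε)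
          + (M * Real.exp R * B' + 2 * L) * B' * (ε * R) ^ 2 + M * (C1 * ε) ^ 2 := by
          gcongr
      _ = ε ^ 2 * η := by ring
  rw [mul_comm _ (ε ^ 2), ← gronwallBound_mul_mul]
  refine norm_le_gronwallBound_of_hasDerivAt (by positivity) (by positivity)
    (fun s hs => ((h.hasDerivAt ε hε s hs).sub (h.hasDerivAt_zero s hs)).sub
      ((h.hasDerivAt_one s hs).const_smul ε)) ?_ (fun s hs => ?_) ht
  · simp [h.init ε hε]
  · rw [perturbedField_sub_sub]
    calc _ ≤ ‖A (x ε s - xd s - ε • x1 s)‖ + ‖fderiv ℝ F (xd s) (x ε s - xd s - ε • x1 s)‖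
          + ‖expansionRemainder F (ε * Z s) (x ε s) (xd s)‖ := norm_add₃_le
      _ ≤ ‖A‖ * ‖x ε s - xd s - ε • x1 s‖ + L * ‖x ε s - xd s - ε • x1 s‖ + ε ^ 2 * η := by
          gcongr
          · exact A.le_opNorm _
          · exact (fderiv ℝ F (xd s)).le_of_opNorm_le (hL _) _
          · exact hrem s hs
      _ = (‖A‖ + L) * ‖x ε s - xd s - ε • x1 s‖ + ε ^ 2 * η := by ring

end SolvesExpansionEquations

end Expansion

theorem approx_difference_first_order_general
    {n : ℕ} (A : EuclideanSpace ℝ (Fin n) →L[ℝ] EuclideanSpace ℝ (Fin n))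
    (Z : ℝ → ℝ) (hZ : Continuous Z)
    (F : EuclideanSpace ℝ (Fin n) → EuclideanSpace ℝ (Fin n))
    (hF : ContDiff ℝ 2 F) (hF0 : F 0 = 0)
    (hDF : ∃ C : ℝ, ∀ x, ‖fderiv ℝ F x‖ ≤ C)
    (hD2F : ∃ C : ℝ, ∀ x, ‖fderiv ℝ (fderiv ℝ F) x‖ ≤ C)
    (Φ0 ψ0 ψ1 : EuclideanSpace ℝ (Fin n))
    (T : ℝ)
    -- the family of solutions Φ_ε
    (Φ : ℝ → ℝ → EuclideanSpace ℝ (Fin n))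
    (hΦinit : ∀ ε ∈ Set.Icc (0:ℝ) 1, Φ ε 0 = Φ0)
    (hΦ : ∀ ε ∈ Set.Icc (0:ℝ) 1, ∀ t ∈ Set.Icc (0:ℝ) T,
      HasDerivAt (Φ ε)
        (A (Φ ε t) + (ε * Z t) • Φ ε t
          + Real.exp (-(ε * Z t)) • F (Real.exp (ε * Z t) • Φ ε t)) t)
    -- the family of differences ψ_ε
    (ψ : ℝ → ℝ → EuclideanSpace ℝ (Fin n))
    (hψinit : ∀ ε ∈ Set.Icc (0:ℝ) 1, ψ ε 0 = ψ0 + ε • ψ1)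
    (hψ : ∀ ε ∈ Set.Icc (0:ℝ) 1, ∀ t ∈ Set.Icc (0:ℝ) T,
      HasDerivAt (ψ ε)
        (A (ψ ε t) + (ε * Z t) • ψ ε t
          + Real.exp (-(ε * Z t)) •
            (F (Real.exp (ε * Z t) • (ψ ε t + Φ ε t))
              - F (Real.exp (ε * Z t) • Φ ε t))) t)
    -- zeroth-order term Φ⁽ᵈ⁾ for Φ
    (Φd : ℝ → EuclideanSpace ℝ (Fin n))
    (hΦdinit : Φd 0 = Φ0)
    (hΦd : ∀ t ∈ Set.Icc (0:ℝ) T,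
      HasDerivAt Φd (A (Φd t) + F (Φd t)) t)
    -- first-order term Φ⁽¹⁾ for Φ
    (Φ1 : ℝ → EuclideanSpace ℝ (Fin n))
    (hΦ1init : Φ1 0 = 0)
    (hΦ1 : ∀ t ∈ Set.Icc (0:ℝ) T,
      HasDerivAt Φ1
        (A (Φ1 t) + (fderiv ℝ F (Φd t)) (Φ1 t)
          + Z t • (Φd t - F (Φd t) + (fderiv ℝ F (Φd t)) (Φd t))) t)
    -- zeroth-order term ψ⁽ᵈ⁾ for ψ
    (ψd : ℝ → EuclideanSpace ℝ (Fin n))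
    (hψdinit : ψd 0 = ψ0)
    (hψd : ∀ t ∈ Set.Icc (0:ℝ) T,
      HasDerivAt ψd (A (ψd t) + (F (ψd t + Φd t) - F (Φd t))) t)
    -- first-order term ψ⁽¹⁾ for ψ, with forcing term λ̃
    (ψ1f : ℝ → EuclideanSpace ℝ (Fin n))
    (hψ1finit : ψ1f 0 = ψ1)
    (hψ1f : ∀ t ∈ Set.Icc (0:ℝ) T,
      HasDerivAt ψ1f
        (A (ψ1f t) + (fderiv ℝ F (ψd t + Φd t)) (ψ1f t)
          + (Z t • ψd t
            + Z t • ((fderiv ℝ F (ψd t + Φd t)) (ψd t + Φd t) - F (ψd t + Φd t))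
            + (fderiv ℝ F (ψd t + Φd t)) (Φ1 t)
            - Z t • ((fderiv ℝ F (Φd t)) (Φd t) - F (Φd t))
            - (fderiv ℝ F (Φd t)) (Φ1 t))) t) :
    ∃ C : ℝ, ∀ ε ∈ Set.Icc (0:ℝ) 1, ∀ t ∈ Set.Icc (0:ℝ) T,
      ‖ψ ε t - ψd t - ε • ψ1f t‖ ≤ C * ε ^ 2 := by
  obtain ⟨L, hL⟩ := hDF
  obtain ⟨M, hM⟩ := hD2F
  have hΦsys : SolvesExpansionEquations A Z F T Φ Φd Φ1 :=
    ⟨fun ε hε => by simp [hΦinit ε hε, hΦdinit, hΦ1init], hΦ, hΦd, hΦ1⟩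
  have hsum : SolvesExpansionEquations A Z F T (fun ε s => ψ ε s + Φ ε s)
      (fun s => ψd s + Φd s) (fun s => ψ1f s + Φ1 s) := by
    refine ⟨fun ε hε => ?_, fun ε hε t ht => ?_, fun t ht => ?_, fun t ht => ?_⟩
    · simp only [hψinit ε hε, hΦinit ε hε, hψdinit, hΦdinit, hψ1finit, hΦ1init, add_zero]
      abel
    · refine ((hψ ε hε t ht).add (hΦ ε hε t ht)).congr_deriv ?_
      simp only [perturbedField, expConj, map_add, smul_add, smul_sub]
      abel
    · refine ((hψd t ht).add (hΦd t ht)).congr_deriv ?_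
      simp only [map_add]
      abel
    · refine ((hψ1f t ht).add (hΦ1 t ht)).congr_deriv ?_
      simp only [map_add, smul_add, smul_sub]
      abel
  obtain ⟨CΦ, hCΦ⟩ := hΦsys.exists_norm_sub_sub_smul_le_mul_sq hZ hF hF0 hL hM
  obtain ⟨Cu, hCu⟩ := hsum.exists_norm_sub_sub_smul_le_mul_sq hZ hF hF0 hL hM
  refine ⟨Cu + CΦ, fun ε hε t ht => ?_⟩
  calc ‖ψ ε t - ψd t - ε • ψ1f t‖
      = ‖(ψ ε t + Φ ε t - (ψd t + Φd t) - ε • (ψ1f t + Φ1 t)) - (Φ ε t - Φd t - ε • Φ1 t)‖ := by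
        rw [smul_add]; congr 1; abel
    _ ≤ Cu * ε ^ 2 + CΦ * ε ^ 2 :=
        (norm_sub_le _ _).trans (add_le_add (hCu ε hε t ht) (hCΦ ε hε t ht))
    _ = (Cu + CΦ) * ε ^ 2 := by ring

/-- First-order asymptotic expansion `ψ_ε = ψ⁽ᵈ⁾ + ε ψ⁽¹⁾ + O(ε²)` of the
difference of two solutions of the random evolutionary equation. -/
theorem approx_difference_first_order
    {n : ℕ} (A : EuclideanSpace ℝ (Fin n) →L[ℝ] EuclideanSpace ℝ (Fin n))
    (Z : ℝ → ℝ) (hZ : Continuous Z)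
    (F : EuclideanSpace ℝ (Fin n) → EuclideanSpace ℝ (Fin n))
    (hF : ContDiff ℝ 2 F) (hF0 : F 0 = 0)
    (hDF : ∃ C : ℝ, ∀ x, ‖fderiv ℝ F x‖ ≤ C)
    (hD2F : ∃ C : ℝ, ∀ x, ‖fderiv ℝ (fderiv ℝ F) x‖ ≤ C)
    (Φ0 ψ0 ψ1 : EuclideanSpace ℝ (Fin n))
    (T : ℝ) (hT : 0 < T)
    -- the family of solutions Φ_ε
    (Φ : ℝ → ℝ → EuclideanSpace ℝ (Fin n))
    (hΦinit : ∀ ε ∈ Set.Icc (0:ℝ) 1, Φ ε 0 = Φ0)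
    (hΦ : ∀ ε ∈ Set.Icc (0:ℝ) 1, ∀ t ∈ Set.Icc (0:ℝ) T,
      HasDerivAt (Φ ε)
        (A (Φ ε t) + (ε * Z t) • Φ ε t
          + Real.exp (-(ε * Z t)) • F (Real.exp (ε * Z t) • Φ ε t)) t)
    -- the family of differences ψ_ε
    (ψ : ℝ → ℝ → EuclideanSpace ℝ (Fin n))
    (hψinit : ∀ ε ∈ Set.Icc (0:ℝ) 1, ψ ε 0 = ψ0 + ε • ψ1)
    (hψ : ∀ ε ∈ Set.Icc (0:ℝ) 1, ∀ t ∈ Set.Icc (0:ℝ) T,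
      HasDerivAt (ψ ε)
        (A (ψ ε t) + (ε * Z t) • ψ ε t
          + Real.exp (-(ε * Z t)) •
            (F (Real.exp (ε * Z t) • (ψ ε t + Φ ε t))
              - F (Real.exp (ε * Z t) • Φ ε t))) t)
    -- zeroth-order term Φ⁽ᵈ⁾ for Φ
    (Φd : ℝ → EuclideanSpace ℝ (Fin n))
    (hΦdinit : Φd 0 = Φ0)
    (hΦd : ∀ t ∈ Set.Icc (0:ℝ) T,
      HasDerivAt Φd (A (Φd t) + F (Φd t)) t)
    -- first-order term Φ⁽¹⁾ for Φ
    (Φ1 : ℝ → EuclideanSpace ℝ (Fin n))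
    (hΦ1init : Φ1 0 = 0)
    (hΦ1 : ∀ t ∈ Set.Icc (0:ℝ) T,
      HasDerivAt Φ1
        (A (Φ1 t) + (fderiv ℝ F (Φd t)) (Φ1 t)
          + Z t • (Φd t - F (Φd t) + (fderiv ℝ F (Φd t)) (Φd t))) t)
    -- zeroth-order term ψ⁽ᵈ⁾ for ψ
    (ψd : ℝ → EuclideanSpace ℝ (Fin n))
    (hψdinit : ψd 0 = ψ0)
    (hψd : ∀ t ∈ Set.Icc (0:ℝ) T,
      HasDerivAt ψd (A (ψd t) + (F (ψd t + Φd t) - F (Φd t))) t)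
    -- first-order term ψ⁽¹⁾ for ψ, with forcing term λ̃
    (ψ1f : ℝ → EuclideanSpace ℝ (Fin n))
    (hψ1finit : ψ1f 0 = ψ1)
    (hψ1f : ∀ t ∈ Set.Icc (0:ℝ) T,
      HasDerivAt ψ1f
        (A (ψ1f t) + (fderiv ℝ F (ψd t + Φd t)) (ψ1f t)
          + (Z t • ψd t
            + Z t • ((fderiv ℝ F (ψd t + Φd t)) (ψd t + Φd t) - F (ψd t + Φd t))
            + (fderiv ℝ F (ψd t + Φd t)) (Φ1 t)
            - Z t • ((fderiv ℝ F (Φd t)) (Φd t) - F (Φd t))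
            - (fderiv ℝ F (Φd t)) (Φ1 t))) t) :
    ∃ C : ℝ, ∀ ε ∈ Set.Icc (0:ℝ) 1, ∀ t ∈ Set.Icc (0:ℝ) T,
      ‖ψ ε t - ψd t - ε • ψ1f t‖ ≤ C * ε ^ 2 :=
  approx_difference_first_order_general A Z hZ F hF hF0 hDF hD2F Φ0 ψ0 ψ1 T Φ hΦinit hΦ ψ hψinit hψ
    Φd hΦdinit hΦd Φ1 hΦ1init hΦ1 ψd hψdinit hψd ψ1f hψ1finit hψ1f
end

section
/- Let A be a continuous linear map on ℝⁿ, F : ℝⁿ → ℝⁿ continuous, w : ℝ → ℝ continuous, ε > 0, and let z : ℝ → ℝ be continuously differentiable with z'(t) = −z(t) + ε w(t). If u : ℝ → ℝⁿ is differentiable and satisfies u'(t) = A u(t) + z(t) u(t) + e^{−z(t)} F(e^{z(t)} u(t)), then U(t) := e^{z(t)} u(t) is differentiable and satisfies U'(t) = A U(t) + F(U(t)) + ε w(t) U(t). -/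
/-!
Product rule: `(e^z u)' = e^z (u' + z' u)`. Substituting the two equations, the linear terms
`z u` and `-z u` cancel, `e^z e^{-z} = 1` removes the conjugation of `F`, and `A` commutes with
the scalar `e^z`; what remains is `A U + F U + ε w U`.
-/

section

variable {E : Type*} [NormedAddCommGroup E] [NormedSpace ℝ E]

theorem HasDerivAt.exp_smul {z : ℝ → ℝ} {u : ℝ → E} {z' : ℝ} {u' : E} {t : ℝ}
    (hz : HasDerivAt z z' t) (hu : HasDerivAt u u' t) :
    HasDerivAt (fun s => Real.exp (z s) • u s) (Real.exp (z t) • (u' + z' • u t)) t := by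
  refine (hz.exp.smul hu).congr_deriv ?_
  rw [smul_add, smul_smul, mul_comm, add_comm]

theorem exp_smul_exp_neg_smul (a : ℝ) (v : E) : Real.exp a • Real.exp (-a) • v = v := by
  rw [smul_smul, ← Real.exp_add, add_neg_cancel, Real.exp_zero, one_smul]

theorem exp_smul_conjugated_field (A : E →L[ℝ] E) (F : E → E) (a b : ℝ) (v : E) :
    Real.exp a • ((A v + a • v + Real.exp (-a) • F (Real.exp a • v)) + (-a + b) • v) =
      A (Real.exp a • v) + F (Real.exp a • v) + b • Real.exp a • v := by
  rw [map_smul, smul_add, smul_add, exp_smul_exp_neg_smul]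
  module

end

theorem conjugation_to_original_equation_general
    {n : ℕ} (A : EuclideanSpace ℝ (Fin n) →L[ℝ] EuclideanSpace ℝ (Fin n))
    (F : EuclideanSpace ℝ (Fin n) → EuclideanSpace ℝ (Fin n))
    (w : ℝ → ℝ)
    (ε : ℝ)
    (z : ℝ → ℝ)
    (hz : ∀ t : ℝ, HasDerivAt z (-z t + ε * w t) t)
    (u : ℝ → EuclideanSpace ℝ (Fin n))
    (hu : ∀ t : ℝ,
      HasDerivAt u
        (A (u t) + z t • u t + Real.exp (-z t) • F (Real.exp (z t) • u t)) t) :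
    ∀ t : ℝ,
      HasDerivAt (fun s => Real.exp (z s) • u s)
        (A (Real.exp (z t) • u t) + F (Real.exp (z t) • u t)
          + (ε * w t) • (Real.exp (z t) • u t)) t := by
  intro t
  rw [← exp_smul_conjugated_field]
  exact (hz t).exp_smul (hu t)

/-- Pathwise conjugation: if `z' = -z + ε w` and
`u' = A u + z u + e^{-z} F(e^{z} u)`, then `U := e^{z} u` satisfies
`U' = A U + F(U) + ε w U`. -/
theorem conjugation_to_original_equation
    {n : ℕ} (A : EuclideanSpace ℝ (Fin n) →L[ℝ] EuclideanSpace ℝ (Fin n))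
    (F : EuclideanSpace ℝ (Fin n) → EuclideanSpace ℝ (Fin n))
    (hF : Continuous F)
    (w : ℝ → ℝ) (hw : Continuous w)
    (ε : ℝ) (hε : 0 < ε)
    (z : ℝ → ℝ)
    (hz : ∀ t : ℝ, HasDerivAt z (-z t + ε * w t) t)
    (u : ℝ → EuclideanSpace ℝ (Fin n))
    (hu : ∀ t : ℝ,
      HasDerivAt u
        (A (u t) + z t • u t + Real.exp (-z t) • F (Real.exp (z t) • u t)) t) :
    ∀ t : ℝ,
      HasDerivAt (fun s => Real.exp (z s) • u s)
        (A (Real.exp (z t) • u t) + F (Real.exp (z t) • u t)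
          + (ε * w t) • (Real.exp (z t) • u t)) t :=
  conjugation_to_original_equation_general A F w ε z hz u hu
end

section
/- Let A be a continuous linear map on ℝⁿ and let Pˢ, Pᵘ be complementary continuous projections (Pˢ + Pᵘ = I) commuting with e^{At} for all t, such that e^{At} restricted to the range of Pᵘ is invertible for all t, and such that there are constants K > 0 and α > 0 > β with ‖e^{At} Pᵘ x‖ ≤ K e^{αt}‖x‖ for t ≤ 0 and ‖e^{At} Pˢ x‖ ≤ K e^{βt}‖x‖ for t ≥ 0. Let z : ℝ → ℝ be continuous with δ := sup_t |z(t)| satisfying β + δ < η < α − δ for some η, let G : [0,∞) × ℝⁿ → ℝⁿ be continuous and Lipschitz in its second variable, and let Φ : [0,∞) → ℝⁿ be continuous. Suppose ψ : [0,∞) → ℝⁿ is continuous, satisfies sup_{t ≥ 0} e^{−ηt − ∫₀ᵗ z(τ)dτ} ‖ψ(t)‖ < ∞, and satisfies for all t ≥ 0 the Lyapunov–Perron integral equation ψ(t) = e^{At + ∫₀ᵗ z(s)ds} ξ + ∫₀ᵗ e^{A(t−s) + ∫ₛᵗ z(r)dr} Pˢ [G(s, ψ(s)+Φ(s)) − G(s,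 Φ(s))] ds − ∫_t^∞ e^{A(t−s) + ∫ₛᵗ z(r)dr} Pᵘ [G(s, ψ(s)+Φ(s)) − G(s, Φ(s))] ds, where ξ ∈ range(Pˢ) (all integrals converge absolutely). Then ψ is continuously differentiable on (0,∞) and satisfies ψ'(t) = A ψ(t) + z(t) ψ(t) + G(t, ψ(t)+Φ(t)) − G(t, Φ(t)), with Pˢ ψ(0) = ξ. -/
/-!
Let `U(t, s) = exp (∫ₛᵗ z) • e^{(t - s) A}` be the evolution operator of `x' = (A + z(t)) x`.
By the cocycle law `U(t, s) = U(t, 0) U(0, s)` the Lyapunov–Perron right-hand side equals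
`U(t, 0) v(t)` with `v(t) = ξ + ∫₀ᵗ U(0, s) Pˢ g(s) ds - ∫ₜ^∞ U(0, s) Pᵘ g(s) ds`, where
`g(s) = G(s, ψ(s) + Φ(s)) - G(s, Φ(s))`. The fundamental theorem of calculus, on `[0, t]` and on the
tail `(t, ∞)`, gives `v' = U(0, t) (Pˢ + Pᵘ) g(t) = U(0, t) g(t)`, and the product rule then gives
`ψ' = A ψ + z ψ + g`. At `t = 0` only `ξ` and the unstable tail integral survive, and `Pˢ` kills
the latter because `e^{tA}` commutes with `Pᵘ` and `Pˢ Pᵘ = 0`.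
-/

open MeasureTheory Set Filter Topology

theorem NormedSpace.exp_add_smul {𝔸 : Type*} [NormedRing 𝔸] [NormedAlgebra ℝ 𝔸] [CompleteSpace 𝔸]
    (x : 𝔸) (a b : ℝ) : exp ((a + b) • x) = exp (a • x) * exp (b • x) := by
  have hball : ∀ y : 𝔸, y ∈ Metric.eball 0 (expSeries ℝ 𝔸).radius :=
    fun y => (expSeries_radius_eq_top ℝ 𝔸).symm ▸ edist_lt_top _ _
  rw [add_smul]
  exact exp_add_of_commute_of_mem_ball (((Commute.refl x).smul_left a).smul_right b)
    (hball _) (hball _)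

variable {E : Type*} [NormedAddCommGroup E] [NormedSpace ℝ E]

theorem hasDerivAt_intervalIntegral_of_continuousOn_Ici [CompleteSpace E] {f : ℝ → E} {a t : ℝ}
    (hf : ContinuousOn f (Ici a)) (ht : a < t) :
    HasDerivAt (fun u => ∫ s in a..u, f s) (f t) t :=
  intervalIntegral.integral_hasDerivAt_right
    ((hf.mono Icc_subset_Ici_self).intervalIntegrable_of_Icc ht.le)
    ((hf.mono Ioi_subset_Ici_self).stronglyMeasurableAtFilter isOpen_Ioi t ht)
    (hf.continuousAt (Ici_mem_nhds ht))

theorem hasDerivAt_setIntegral_Ioi [CompleteSpace E] {f : ℝ → E} {a t : ℝ}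
    (hf : ContinuousOn f (Ioi a)) (hint : IntegrableOn f (Ioi a)) (ht : a < t) :
    HasDerivAt (fun u => ∫ s in Ioi u, f s) (-f t) t := by
  have hprim : HasDerivAt (fun u => ∫ s in a..u, f s) (f t) t :=
    intervalIntegral.integral_hasDerivAt_right
      ((intervalIntegrable_iff_integrableOn_Ioc_of_le ht.le).2 (hint.mono_set Ioc_subset_Ioi_self))
      (hf.stronglyMeasurableAtFilter isOpen_Ioi t ht) (hf.continuousAt (Ioi_mem_nhds ht))
  refine (hprim.const_sub (∫ s in Ioi a, f s)).congr_of_eventuallyEq ?_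
  filter_upwards [Ioi_mem_nhds ht] with u hu
  rw [← intervalIntegral.integral_Ioi_sub_Ioi hint (le_of_lt hu), sub_sub_cancel]

theorem ContinuousLinearMap.comp_eq_zero_of_add_eq_id {P Q : E →L[ℝ] E} (hP : P.comp P = P)
    (hPQ : P + Q = ContinuousLinearMap.id ℝ E) : P.comp Q = 0 := by
  rw [eq_sub_of_add_eq' hPQ, comp_sub, hP, comp_id, sub_self]

/-- The evolution operator `U(t, s)` of the linear equation `x' = A x + z(t) x`. -/
noncomputable def evolution (A : E →L[ℝ] E) (z : ℝ → ℝ) (t s : ℝ) : E →L[ℝ] E :=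
  Real.exp (∫ r in s..t, z r) • NormedSpace.exp ((t - s) • A)

section Evolution

variable (A : E →L[ℝ] E) {z : ℝ → ℝ}

@[simp]
theorem evolution_self (t : ℝ) : evolution A z t t = 1 := by
  simp [evolution]

theorem evolution_zero_right (t : ℝ) :
    evolution A z t 0 = Real.exp (∫ r in (0:ℝ)..t, z r) • NormedSpace.exp (t • A) := by
  simp [evolution]

theorem evolution_mul [CompleteSpace E] (hz : Continuous z) (t r s : ℝ) :
    evolution A z t r * evolution A z r s = evolution A z t s := by
  rw [evolution, evolution, evolution, smul_mul_smul_comm, ← Real.exp_add, add_comm,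
    intervalIntegral.integral_add_adjacent_intervals (hz.intervalIntegrable _ _)
      (hz.intervalIntegrable _ _), ← sub_add_sub_cancel t r s]
  exact congrArg _ (NormedSpace.exp_add_smul A _ _).symm

theorem evolution_apply_evolution_apply [CompleteSpace E] (hz : Continuous z) (t r s : ℝ) (x : E) :
    evolution A z t r (evolution A z r s x) = evolution A z t s x := by
  rw [← evolution_mul A hz t r s, mul_apply_eq_comp]

theorem hasDerivAt_evolution [CompleteSpace E] (hz : Continuous z) (s t : ℝ) :
    HasDerivAt (fun u => evolution A z u s)
      (z t • evolution A z t s + A * evolution A z t s) t := by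
  have hscalar : HasDerivAt (fun u => Real.exp (∫ r in s..u, z r))
      (Real.exp (∫ r in s..t, z r) * z t) t :=
    (hz.integral_hasStrictDerivAt s t).hasDerivAt.exp
  have hop : HasDerivAt (fun u => NormedSpace.exp ((u - s) • A))
      (A * NormedSpace.exp ((t - s) • A)) t := by
    simpa [Function.comp_def] using
      (hasDerivAt_exp_smul_const' A (t - s)).scomp t ((hasDerivAt_id t).sub_const s)
  refine (hscalar.smul hop).congr_deriv ?_
  rw [evolution, mul_smul_comm, mul_comm, mul_smul, add_comm]

theorem continuous_evolution [CompleteSpace E] (hz : Continuous z) (t : ℝ) :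
    Continuous (evolution A z t) := by
  have hint : Continuous fun s => ∫ r in s..t, z r := by
    have hsymm : (fun s => ∫ r in s..t, z r) = fun s => -∫ r in t..s, z r :=
      funext fun s => intervalIntegral.integral_symm _ _
    rw [hsymm]
    exact (intervalIntegral.continuous_primitive (fun a b => hz.intervalIntegrable a b) t).neg
  exact hint.rexp.smul
    ((differentiable_exp_smul_const ℝ A).continuous.comp (continuous_const.sub continuous_id))

theorem continuousOn_evolution_apply_comp [CompleteSpace E] (P : E →L[ℝ] E) (hz : Continuous z)
    {g : ℝ → E} {S : Set ℝ} (hg : ContinuousOn g S) (t : ℝ) :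
    ContinuousOn (fun s => evolution A z t s (P (g s))) S :=
  (continuous_evolution A hz t).continuousOn.clm_apply (P.continuous.comp_continuousOn hg)

theorem evolution_apply_comm {P : E →L[ℝ] E}
    (hP : ∀ t : ℝ, (NormedSpace.exp (t • A)).comp P = P.comp (NormedSpace.exp (t • A)))
    (t s : ℝ) (x : E) : evolution A z t s (P x) = P (evolution A z t s x) := by
  simp [evolution, ← ContinuousLinearMap.comp_apply, hP]

end Evolution

/-- The right-hand side of the Lyapunov–Perron equation with forcing term `g`. -/
noncomputable def lyapunovPerron (A Ps Pu : E →L[ℝ] E) (z : ℝ → ℝ) (ξ : E) (g : ℝ → E)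
    (t : ℝ) : E :=
  evolution A z t 0 ξ + (∫ s in (0:ℝ)..t, evolution A z t s (Ps (g s)))
    - ∫ s in Ioi t, evolution A z t s (Pu (g s))

noncomputable def lyapunovPerronProfile (A Ps Pu : E →L[ℝ] E) (z : ℝ → ℝ) (ξ : E) (g : ℝ → E)
    (t : ℝ) : E :=
  ξ + (∫ s in (0:ℝ)..t, evolution A z 0 s (Ps (g s))) - ∫ s in Ioi t, evolution A z 0 s (Pu (g s))

section LyapunovPerron

variable [CompleteSpace E] (A Ps Pu : E →L[ℝ] E) {z : ℝ → ℝ} (ξ : E) {g : ℝ → E}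

theorem lyapunovPerron_eq_evolution_apply_profile (hz : Continuous z)
    (hg : ContinuousOn g (Ici 0))
    (hint : IntegrableOn (fun s => evolution A z 0 s (Pu (g s))) (Ioi 0)) {t : ℝ} (ht : 0 ≤ t) :
    lyapunovPerron A Ps Pu z ξ g t
      = evolution A z t 0 (lyapunovPerronProfile A Ps Pu z ξ g t) := by
  have hS : IntervalIntegrable (fun s => evolution A z 0 s (Ps (g s))) volume 0 t :=
    ((continuousOn_evolution_apply_comp A Ps hz hg 0).mono
      Icc_subset_Ici_self).intervalIntegrable_of_Icc ht
  rw [lyapunovPerron, lyapunovPerronProfile, map_sub, map_add,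
    ← ContinuousLinearMap.intervalIntegral_comp_comm _ hS,
    ← ContinuousLinearMap.integral_comp_comm _ (hint.mono_set (Ioi_subset_Ioi ht))]
  simp only [evolution_apply_evolution_apply A hz]

theorem hasDerivAt_lyapunovPerronProfile (hz : Continuous z) (hg : ContinuousOn g (Ici 0))
    (hcompl : Ps + Pu = ContinuousLinearMap.id ℝ E)
    (hint : IntegrableOn (fun s => evolution A z 0 s (Pu (g s))) (Ioi 0)) {t : ℝ} (ht : 0 < t) :
    HasDerivAt (lyapunovPerronProfile A Ps Pu z ξ g) (evolution A z 0 t (g t)) t := by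
  have hS := (hasDerivAt_intervalIntegral_of_continuousOn_Ici
    (continuousOn_evolution_apply_comp A Ps hz hg 0) ht).const_add ξ
  have hU := hasDerivAt_setIntegral_Ioi
    ((continuousOn_evolution_apply_comp A Pu hz hg 0).mono Ioi_subset_Ici_self) hint ht
  refine (hS.sub hU).congr_deriv ?_
  rw [sub_neg_eq_add, ← map_add, ← add_apply, hcompl, ContinuousLinearMap.id_apply]

theorem hasDerivAt_lyapunovPerron (hz : Continuous z) (hg : ContinuousOn g (Ici 0))
    (hcompl : Ps + Pu = ContinuousLinearMap.id ℝ E)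
    (hint : IntegrableOn (fun s => evolution A z 0 s (Pu (g s))) (Ioi 0)) {t : ℝ} (ht : 0 < t) :
    HasDerivAt (lyapunovPerron A Ps Pu z ξ g)
      (A (lyapunovPerron A Ps Pu z ξ g t) + z t • lyapunovPerron A Ps Pu z ξ g t + g t) t := by
  have hprofile := hasDerivAt_lyapunovPerronProfile A Ps Pu ξ hz hg hcompl hint ht
  have hev := (hasDerivAt_evolution A hz 0 t).clm_apply hprofile
  rw [evolution_apply_evolution_apply A hz, evolution_self, one_apply_eq_self] at hev
  rw [lyapunovPerron_eq_evolution_apply_profile A Ps Pu ξ hz hg hint ht.le]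
  refine (hev.congr_of_eventuallyEq ?_).congr_deriv ?_
  · filter_upwards [Ioi_mem_nhds ht] with u hu
    exact lyapunovPerron_eq_evolution_apply_profile A Ps Pu ξ hz hg hint (le_of_lt hu)
  · rw [add_apply, mul_apply_eq_comp, smul_apply]
    abel

theorem apply_lyapunovPerron_zero (hPs : Ps.comp Ps = Ps)
    (hcompl : Ps + Pu = ContinuousLinearMap.id ℝ E)
    (hcomm : ∀ t : ℝ, (NormedSpace.exp (t • A)).comp Pu = Pu.comp (NormedSpace.exp (t • A)))
    (hξ : ξ ∈ Set.range Ps)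
    (hint : IntegrableOn (fun s => evolution A z 0 s (Pu (g s))) (Ioi 0)) :
    Ps (lyapunovPerron A Ps Pu z ξ g 0) = ξ := by
  have hPsPu := ContinuousLinearMap.comp_eq_zero_of_add_eq_id hPs hcompl
  have hvanish : ∀ s, Ps (evolution A z 0 s (Pu (g s))) = 0 := fun s => by
    rw [evolution_apply_comm A hcomm, ← ContinuousLinearMap.comp_apply, hPsPu, zero_apply]
  obtain ⟨y, rfl⟩ := hξ
  rw [lyapunovPerron, evolution_self, intervalIntegral.integral_same, add_zero, map_sub,
    ← ContinuousLinearMap.integral_comp_comm _ hint]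
  simp only [hvanish, integral_zero, sub_zero]
  rw [one_apply_eq_self, ← ContinuousLinearMap.comp_apply, hPs]

end LyapunovPerron

theorem lyapunov_perron_implies_ode_general
    {n : ℕ} (A : EuclideanSpace ℝ (Fin n) →L[ℝ] EuclideanSpace ℝ (Fin n))
    (Ps Pu : EuclideanSpace ℝ (Fin n) →L[ℝ] EuclideanSpace ℝ (Fin n))
    (hPs : Ps.comp Ps = Ps)
    (hcompl : Ps + Pu = ContinuousLinearMap.id ℝ (EuclideanSpace ℝ (Fin n)))
    (hcomm : ∀ t : ℝ, (NormedSpace.exp (t • A)).comp Pu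
      = Pu.comp (NormedSpace.exp (t • A)))
    (z : ℝ → ℝ) (hz : Continuous z)
    (G : ℝ → EuclideanSpace ℝ (Fin n) → EuclideanSpace ℝ (Fin n))
    (hGcont : ContinuousOn (fun p : ℝ × EuclideanSpace ℝ (Fin n) => G p.1 p.2)
      (Set.Ici 0 ×ˢ Set.univ))
    (L : ℝ)
    (Φ : ℝ → EuclideanSpace ℝ (Fin n)) (hΦ : ContinuousOn Φ (Set.Ici 0))
    (ψ : ℝ → EuclideanSpace ℝ (Fin n)) (hψcont : ContinuousOn ψ (Set.Ici 0))
    (ξ : EuclideanSpace ℝ (Fin n)) (hξ : ξ ∈ Set.range Ps)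
    (hInt : ∀ t ≥ (0:ℝ),
      IntegrableOn
        (fun s => Real.exp (∫ r in s..t, z r) •
          (NormedSpace.exp ((t - s) • A)) (Pu (G s (ψ s + Φ s) - G s (Φ s))))
        (Set.Ioi t))
    (heq : ∀ t ≥ (0:ℝ),
      ψ t = Real.exp (∫ s in (0:ℝ)..t, z s) • (NormedSpace.exp (t • A)) ξ
        + (∫ s in (0:ℝ)..t, Real.exp (∫ r in s..t, z r) •
            (NormedSpace.exp ((t - s) • A)) (Ps (G s (ψ s + Φ s) - G s (Φ s))))
        - ∫ s in Set.Ioi t, Real.exp (∫ r in s..t, z r) •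
            (NormedSpace.exp ((t - s) • A)) (Pu (G s (ψ s + Φ s) - G s (Φ s)))) :
    (∀ t ∈ Set.Ioi (0:ℝ),
      HasDerivAt ψ (A (ψ t) + z t • ψ t + (G t (ψ t + Φ t) - G t (Φ t))) t)
    ∧ Ps (ψ 0) = ξ := by
  set g : ℝ → EuclideanSpace ℝ (Fin n) := fun s => G s (ψ s + Φ s) - G s (Φ s)
  have hg : ContinuousOn g (Ici 0) :=
    (hGcont.comp (continuousOn_id.prodMk (hψcont.add hΦ)) fun s hs => ⟨hs, trivial⟩).sub
      (hGcont.comp (continuousOn_id.prodMk hΦ) fun s hs => ⟨hs, trivial⟩)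
  have hint : IntegrableOn (fun s => evolution A z 0 s (Pu (g s))) (Ioi 0) := hInt 0 le_rfl
  have hψ : ∀ t ≥ 0, ψ t = lyapunovPerron A Ps Pu z ξ g t := fun t ht => by
    rw [heq t ht, lyapunovPerron, evolution_zero_right]
    rfl
  refine ⟨fun t ht => ?_, ?_⟩
  · have hLP := hasDerivAt_lyapunovPerron A Ps Pu ξ hz hg hcompl hint ht
    rw [← hψ t (le_of_lt ht)] at hLP
    exact hLP.congr_of_eventuallyEq
      (eventually_of_mem (Ioi_mem_nhds ht) fun u hu => hψ u (le_of_lt hu))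
  · rw [hψ 0 le_rfl]
    exact apply_lyapunovPerron_zero A Ps Pu ξ hPs hcompl hcomm hξ hint

/-- A function in the weighted space `Ĉ⁺_η` satisfying the Lyapunov–Perron
integral equation is a solution of the differential equation
`ψ' = A ψ + z(t) ψ + G(t, ψ + Φ) - G(t, Φ)` with `Pˢ ψ(0) = ξ`. -/
theorem lyapunov_perron_implies_ode
    {n : ℕ} (A : EuclideanSpace ℝ (Fin n) →L[ℝ] EuclideanSpace ℝ (Fin n))
    (Ps Pu : EuclideanSpace ℝ (Fin n) →L[ℝ] EuclideanSpace ℝ (Fin n))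
    (hPs : Ps.comp Ps = Ps) (hPu : Pu.comp Pu = Pu)
    (hcompl : Ps + Pu = ContinuousLinearMap.id ℝ (EuclideanSpace ℝ (Fin n)))
    (hcomm : ∀ t : ℝ, (NormedSpace.exp (t • A)).comp Pu
      = Pu.comp (NormedSpace.exp (t • A)))
    (hbij : ∀ t : ℝ,
      Set.BijOn (fun x => NormedSpace.exp (t • A) x) (Set.range Pu) (Set.range Pu))
    (K α β : ℝ) (hK : 0 < K) (hα : 0 < α) (hβ : β < 0)
    (hdichU : ∀ t ≤ (0:ℝ), ∀ x,
      ‖NormedSpace.exp (t • A) (Pu x)‖ ≤ K * Real.exp (α * t) * ‖x‖)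
    (hdichS : ∀ t ≥ (0:ℝ), ∀ x,
      ‖NormedSpace.exp (t • A) (Ps x)‖ ≤ K * Real.exp (β * t) * ‖x‖)
    (z : ℝ → ℝ) (hz : Continuous z)
    (δ η : ℝ) (hδ : ∀ t : ℝ, |z t| ≤ δ)
    (hη₁ : β + δ < η) (hη₂ : η < α - δ)
    (G : ℝ → EuclideanSpace ℝ (Fin n) → EuclideanSpace ℝ (Fin n))
    (hGcont : ContinuousOn (fun p : ℝ × EuclideanSpace ℝ (Fin n) => G p.1 p.2)
      (Set.Ici 0 ×ˢ Set.univ))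
    (L : ℝ) (hGLip : ∀ t ∈ Set.Ici (0:ℝ), ∀ x y, ‖G t x - G t y‖ ≤ L * ‖x - y‖)
    (Φ : ℝ → EuclideanSpace ℝ (Fin n)) (hΦ : ContinuousOn Φ (Set.Ici 0))
    (ψ : ℝ → EuclideanSpace ℝ (Fin n)) (hψcont : ContinuousOn ψ (Set.Ici 0))
    (hψbdd : ∃ M : ℝ, ∀ t ≥ (0:ℝ),
      Real.exp (-(η * t) - ∫ τ in (0:ℝ)..t, z τ) * ‖ψ t‖ ≤ M)
    (ξ : EuclideanSpace ℝ (Fin n)) (hξ : ξ ∈ Set.range Ps)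
    (hInt : ∀ t ≥ (0:ℝ),
      IntegrableOn
        (fun s => Real.exp (∫ r in s..t, z r) •
          (NormedSpace.exp ((t - s) • A)) (Pu (G s (ψ s + Φ s) - G s (Φ s))))
        (Set.Ioi t))
    (heq : ∀ t ≥ (0:ℝ),
      ψ t = Real.exp (∫ s in (0:ℝ)..t, z s) • (NormedSpace.exp (t • A)) ξ
        + (∫ s in (0:ℝ)..t, Real.exp (∫ r in s..t, z r) •
            (NormedSpace.exp ((t - s) • A)) (Ps (G s (ψ s + Φ s) - G s (Φ s))))
        - ∫ s in Set.Ioi t, Real.exp (∫ r in s..t, z r) •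
            (NormedSpace.exp ((t - s) • A)) (Pu (G s (ψ s + Φ s) - G s (Φ s)))) :
    (∀ t ∈ Set.Ioi (0:ℝ),
      HasDerivAt ψ (A (ψ t) + z t • ψ t + (G t (ψ t + Φ t) - G t (Φ t))) t)
    ∧ Ps (ψ 0) = ξ :=
  lyapunov_perron_implies_ode_general A Ps Pu hPs hcompl hcomm z hz G hGcont L Φ hΦ ψ hψcont ξ hξ
    hInt heq
end

section
/- Let A be a continuous linear map on ℝⁿ and let Pˢ, Pᵘ be complementary continuous projections commuting with e^{At} for all t, such that e^{At} restricted to the range of Pᵘ is invertible for all t, and such that there are constants K > 0 and α > 0 with ‖e^{At} Pᵘ x‖ ≤ K e^{αt}‖x‖ for t ≤ 0. Let F : ℝⁿ → ℝⁿ be Lipschitz continuous, Φ : [0,∞) → ℝⁿ continuous, and let ψ : [0,∞) → ℝⁿ be a differentiable solution of ψ'(t) = A ψ(t) + F(Φ(t) + ψ(t)) − F(Φ(t)) with sup_{t ≥ 0} e^{−ηt}‖ψ(t)‖ < ∞ for some η < α. Then for every t ≥ 0 the integral ∫_t^∞ e^{A(t−s)} Pᵘ [F(Φ(s)+ψ(s))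 − F(Φ(s))] ds converges absolutely and Pᵘ ψ(t) = − ∫_t^∞ e^{A(t−s)} Pᵘ [F(Φ(s)+ψ(s)) − F(Φ(s))] ds; in particular Pᵘ ψ(0) = − ∫_0^∞ e^{−As} Pᵘ [F(Φ(s)+ψ(s)) − F(Φ(s))] ds. -/
/-!
Write `g(s) = F(Φ s + ψ s) - F(Φ s)`, so that `ψ' = A ψ + g`. Since `Pᵘ` commutes with every
`e^{tA}`, it commutes with `A`, and by variation of constants `r ↦ e^{(t - r)A} Pᵘ ψ(r)` has
derivative `e^{(t - r)A} Pᵘ g(r)`. The dichotomy bound for negative times, together with the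
growth bound `‖ψ r‖ ≤ M e^{ηr}` (which passes to `g` by the Lipschitz property), makes both this
function and its derivative decay like `e^{-(α - η)r}`. The fundamental theorem of calculus on
`[t, ∞)` then gives `∫_t^∞ e^{(t - s)A} Pᵘ g(s) ds = 0 - Pᵘ ψ(t)`.
-/

open MeasureTheory Filter Topology Set NormedSpace

theorem tendsto_zero_of_norm_le_mul_exp_neg {E : Type*} [NormedAddCommGroup E] {u : ℝ → E}
    {C b : ℝ} (hb : 0 < b) (h : ∀ᶠ T in atTop, ‖u T‖ ≤ C * Real.exp (-b * T)) :
    Tendsto u atTop (𝓝 0) := by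
  have hexp : Tendsto (fun T => C * Real.exp (-b * T)) atTop (𝓝 0) := by
    simpa using (Real.tendsto_exp_neg_atTop_nhds_zero.comp
      (tendsto_id.const_mul_atTop hb)).const_mul C
  exact squeeze_zero_norm' h hexp

section LyapunovPerron

variable {E : Type*} [NormedAddCommGroup E] [NormedSpace ℝ E] {A P : E →L[ℝ] E} {K α : ℝ}

theorem norm_exp_smul_sub_apply_le (hK : 0 ≤ K)
    (hdich : ∀ τ ≤ (0 : ℝ), ∀ y, ‖exp (τ • A) (P y)‖ ≤ K * Real.exp (α * τ) * ‖y‖)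
    {t s M η : ℝ} (hts : t ≤ s) {y : E}
    (hy : ‖y‖ ≤ M * Real.exp (η * s)) :
    ‖exp ((t - s) • A) (P y)‖ ≤ K * M * Real.exp (α * t) * Real.exp (-(α - η) * s) := by
  have hexp : Real.exp (α * (t - s)) * Real.exp (η * s)
      = Real.exp (α * t) * Real.exp (-(α - η) * s) := by
    rw [← Real.exp_add, ← Real.exp_add]; ring_nf
  calc ‖exp ((t - s) • A) (P y)‖ ≤ K * Real.exp (α * (t - s)) * ‖y‖ :=
        hdich _ (by linarith) y
    _ ≤ K * Real.exp (α * (t - s)) * (M * Real.exp (η * s)) := by gcongr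
    _ = K * M * Real.exp (α * t) * Real.exp (-(α - η) * s) := by
        linear_combination (K * M) * hexp

variable [CompleteSpace E]

theorem commute_of_forall_commute_exp_smul
    (h : ∀ t : ℝ, Commute (exp (t • A)) P) : Commute A P := by
  have hd := hasDerivAt_exp_smul_const (𝕂 := ℝ) A 0
  have hl : HasDerivAt (fun t : ℝ => exp (t • A) * P) (exp ((0 : ℝ) • A) * A * P) 0 :=
    hd.mul_const P
  have hr : HasDerivAt (fun t : ℝ => P * exp (t • A)) (P * (exp ((0 : ℝ) • A) * A)) 0 :=
    hd.const_mul P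
  have := hl.unique (hr.congr_of_eventuallyEq (Eventually.of_forall fun t => (h t).eq))
  simpa [mul_assoc, Commute, SemiconjBy] using this

theorem hasDerivAt_exp_smul_sub_apply {u : ℝ → E} {v : E} {t s : ℝ}
    (hu : HasDerivAt u (A (u s) + v) s) :
    HasDerivAt (fun r => exp ((t - r) • A) (u r)) (exp ((t - s) • A) v) s := by
  have he : HasDerivAt (fun r : ℝ => exp ((t - r) • A))
      ((-1 : ℝ) • (exp ((t - s) • A) * A)) s :=
    (hasDerivAt_exp_smul_const (𝕂 := ℝ) A (t - s)).scomp s ((hasDerivAt_id s).const_sub t)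
  convert he.clm_apply hu using 1
  simp [map_add]

theorem integrableOn_Ioi_exp_smul_sub_apply (hK : 0 ≤ K)
    (hdich : ∀ τ ≤ (0 : ℝ), ∀ y, ‖exp (τ • A) (P y)‖ ≤ K * Real.exp (α * τ) * ‖y‖)
    {v : ℝ → E} {t η N : ℝ} (hη : η < α)
    (hv : ContinuousOn v (Ici t)) (hvN : ∀ s ≥ t, ‖v s‖ ≤ N * Real.exp (η * s)) :
    IntegrableOn (fun s => exp ((t - s) • A) (P (v s))) (Ioi t) := by
  have hcont : ContinuousOn (fun s => exp ((t - s) • A) (P (v s))) (Ici t) :=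
    ((differentiable_exp_smul_const ℝ A).continuous.comp (by fun_prop)).continuousOn.clm_apply
      (P.continuous.comp_continuousOn hv)
  refine Integrable.mono' ((exp_neg_integrableOn_Ioi t (sub_pos.2 hη)).const_mul
    (K * N * Real.exp (α * t))) ((hcont.mono Ioi_subset_Ici_self).aestronglyMeasurable
      measurableSet_Ioi) ?_
  filter_upwards [self_mem_ae_restrict measurableSet_Ioi] with s hs
  exact norm_exp_smul_sub_apply_le hK hdich hs.le (hvN s hs.le)

theorem apply_eq_neg_integral_Ioi_exp_smul_sub (hK : 0 ≤ K)
    (hdich : ∀ τ ≤ (0 : ℝ), ∀ y, ‖exp (τ • A) (P y)‖ ≤ K * Real.exp (α * τ) * ‖y‖)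
    (hAP : Commute A P) {x v : ℝ → E}
    {t η M N : ℝ} (hη : η < α) (hx : ∀ s ≥ t, HasDerivAt x (A (x s) + v s) s)
    (hv : ContinuousOn v (Ici t)) (hxM : ∀ s ≥ t, ‖x s‖ ≤ M * Real.exp (η * s))
    (hvN : ∀ s ≥ t, ‖v s‖ ≤ N * Real.exp (η * s)) :
    P (x t) = -∫ s in Ioi t, exp ((t - s) • A) (P (v s)) := by
  have hPx : ∀ s ≥ t, HasDerivAt (fun r => P (x r)) (A (P (x s)) + P (v s)) s := by
    intro s hs
    have h := P.hasFDerivAt.comp_hasDerivAt s (hx s hs)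
    rwa [map_add, ← show A (P (x s)) = P (A (x s)) from DFunLike.congr_fun hAP.eq (x s)] at h
  have hdecay : Tendsto (fun r => exp ((t - r) • A) (P (x r))) atTop (𝓝 0) :=
    tendsto_zero_of_norm_le_mul_exp_neg (sub_pos.2 hη) <| (eventually_ge_atTop t).mono
      fun r hr => norm_exp_smul_sub_apply_le hK hdich hr (hxM r hr)
  rw [integral_Ioi_of_hasDerivAt_of_tendsto' (fun s hs => hasDerivAt_exp_smul_sub_apply (hPx s hs))
    (integrableOn_Ioi_exp_smul_sub_apply hK hdich hη hv hvN) hdecay]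
  simp

end LyapunovPerron

theorem unstable_component_integral_formula_general
    {n : ℕ} (A : EuclideanSpace ℝ (Fin n) →L[ℝ] EuclideanSpace ℝ (Fin n))
    (Pu : EuclideanSpace ℝ (Fin n) →L[ℝ] EuclideanSpace ℝ (Fin n))
    (hcomm : ∀ t : ℝ, (NormedSpace.exp (t • A)).comp Pu
      = Pu.comp (NormedSpace.exp (t • A)))
    (K α : ℝ) (hK : 0 < K)
    (hdichU : ∀ t ≤ (0:ℝ), ∀ x,
      ‖NormedSpace.exp (t • A) (Pu x)‖ ≤ K * Real.exp (α * t) * ‖x‖)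
    (F : EuclideanSpace ℝ (Fin n) → EuclideanSpace ℝ (Fin n))
    (LF : ℝ) (hFLip : LipschitzWith (Real.toNNReal LF) F)
    (Φ : ℝ → EuclideanSpace ℝ (Fin n)) (hΦ : ContinuousOn Φ (Set.Ici 0))
    (ψ : ℝ → EuclideanSpace ℝ (Fin n))
    (hψ : ∀ t ≥ (0:ℝ),
      HasDerivAt ψ (A (ψ t) + (F (Φ t + ψ t) - F (Φ t))) t)
    (η : ℝ) (hη : η < α)
    (hψbdd : ∃ M : ℝ, ∀ t ≥ (0:ℝ), Real.exp (-(η * t)) * ‖ψ t‖ ≤ M) :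
    (∀ t ≥ (0:ℝ),
      IntegrableOn
        (fun s => (NormedSpace.exp ((t - s) • A)) (Pu (F (Φ s + ψ s) - F (Φ s))))
        (Set.Ioi t)
      ∧ Pu (ψ t) = -∫ s in Set.Ioi t,
          (NormedSpace.exp ((t - s) • A)) (Pu (F (Φ s + ψ s) - F (Φ s))))
    ∧ Pu (ψ 0) = -∫ s in Set.Ioi (0:ℝ),
        (NormedSpace.exp ((-s) • A)) (Pu (F (Φ s + ψ s) - F (Φ s))) := by
  obtain ⟨M, hM⟩ := hψbdd
  have hψM : ∀ s ≥ (0 : ℝ), ‖ψ s‖ ≤ M * Real.exp (η * s) := fun s hs => by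
    have h := hM s hs
    rwa [Real.exp_neg, inv_mul_le_iff₀ (Real.exp_pos _), mul_comm] at h
  have hgN : ∀ s ≥ (0 : ℝ),
      ‖F (Φ s + ψ s) - F (Φ s)‖ ≤ (LF.toNNReal * M) * Real.exp (η * s) := fun s hs =>
    calc ‖F (Φ s + ψ s) - F (Φ s)‖ ≤ LF.toNNReal * ‖Φ s + ψ s - Φ s‖ := hFLip.norm_sub_le _ _
      _ ≤ LF.toNNReal * (M * Real.exp (η * s)) := by
          rw [add_sub_cancel_left]; gcongr; exact hψM s hs
      _ = (LF.toNNReal * M) * Real.exp (η * s) := (mul_assoc ..).symm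
  have hψcont : ContinuousOn ψ (Ici 0) := fun s hs =>
    (hψ s hs).continuousAt.continuousWithinAt
  have hgcont : ContinuousOn (fun s => F (Φ s + ψ s) - F (Φ s)) (Ici 0) :=
    (hFLip.continuous.comp_continuousOn (hΦ.add hψcont)).sub
      (hFLip.continuous.comp_continuousOn hΦ)
  have hAPu : Commute A Pu := commute_of_forall_commute_exp_smul hcomm
  have hLP : ∀ t ≥ (0 : ℝ),
      IntegrableOn
        (fun s => (NormedSpace.exp ((t - s) • A)) (Pu (F (Φ s + ψ s) - F (Φ s)))) (Ioi t)
      ∧ Pu (ψ t) = -∫ s in Ioi t,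
          (NormedSpace.exp ((t - s) • A)) (Pu (F (Φ s + ψ s) - F (Φ s))) := fun t ht => by
    have hgcont_t := hgcont.mono (Ici_subset_Ici.2 ht)
    have hgN_t : ∀ s ≥ t, _ := fun s hs => hgN s (ht.trans hs)
    exact ⟨integrableOn_Ioi_exp_smul_sub_apply hK.le hdichU hη hgcont_t hgN_t,
      apply_eq_neg_integral_Ioi_exp_smul_sub hK.le hdichU hAPu hη
        (fun s hs => hψ s (ht.trans hs)) hgcont_t (fun s hs => hψM s (ht.trans hs)) hgN_t⟩
  exact ⟨hLP, by simpa using (hLP 0 le_rfl).2⟩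

/-- Deterministic leaf formula: the unstable component of a tempered solution
of `ψ' = A ψ + F(Φ + ψ) - F(Φ)` is given by the Lyapunov–Perron integral. -/
theorem unstable_component_integral_formula
    {n : ℕ} (A : EuclideanSpace ℝ (Fin n) →L[ℝ] EuclideanSpace ℝ (Fin n))
    (Ps Pu : EuclideanSpace ℝ (Fin n) →L[ℝ] EuclideanSpace ℝ (Fin n))
    (hPs : Ps.comp Ps = Ps) (hPu : Pu.comp Pu = Pu)
    (hcompl : Ps + Pu = ContinuousLinearMap.id ℝ (EuclideanSpace ℝ (Fin n)))
    (hcomm : ∀ t : ℝ, (NormedSpace.exp (t • A)).comp Pu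
      = Pu.comp (NormedSpace.exp (t • A)))
    (hbij : ∀ t : ℝ,
      Set.BijOn (fun x => NormedSpace.exp (t • A) x) (Set.range Pu) (Set.range Pu))
    (K α : ℝ) (hK : 0 < K) (hα : 0 < α)
    (hdichU : ∀ t ≤ (0:ℝ), ∀ x,
      ‖NormedSpace.exp (t • A) (Pu x)‖ ≤ K * Real.exp (α * t) * ‖x‖)
    (F : EuclideanSpace ℝ (Fin n) → EuclideanSpace ℝ (Fin n))
    (LF : ℝ) (hFLip : LipschitzWith (Real.toNNReal LF) F)
    (Φ : ℝ → EuclideanSpace ℝ (Fin n)) (hΦ : ContinuousOn Φ (Set.Ici 0))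
    (ψ : ℝ → EuclideanSpace ℝ (Fin n))
    (hψ : ∀ t ≥ (0:ℝ),
      HasDerivAt ψ (A (ψ t) + (F (Φ t + ψ t) - F (Φ t))) t)
    (η : ℝ) (hη : η < α)
    (hψbdd : ∃ M : ℝ, ∀ t ≥ (0:ℝ), Real.exp (-(η * t)) * ‖ψ t‖ ≤ M) :
    (∀ t ≥ (0:ℝ),
      IntegrableOn
        (fun s => (NormedSpace.exp ((t - s) • A)) (Pu (F (Φ s + ψ s) - F (Φ s))))
        (Set.Ioi t)
      ∧ Pu (ψ t) = -∫ s in Set.Ioi t,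
          (NormedSpace.exp ((t - s) • A)) (Pu (F (Φ s + ψ s) - F (Φ s))))
    ∧ Pu (ψ 0) = -∫ s in Set.Ioi (0:ℝ),
        (NormedSpace.exp ((-s) • A)) (Pu (F (Φ s + ψ s) - F (Φ s))) :=
  unstable_component_integral_formula_general A Pu hcomm K α hK hdichU F LF hFLip Φ hΦ ψ hψ η hη
    hψbdd
end

section
/- Let A be a continuous linear map on ℝⁿ and let Pˢ, Pᵘ be complementary continuous projections commuting with e^{At} for all t, such that e^{At} restricted to the range of Pᵘ is invertible for all t, and with constants K > 0, α > 0 > β such that ‖e^{At} Pᵘ x‖ ≤ K e^{αt}‖x‖ for t ≤ 0 and ‖e^{At} Pˢ x‖ ≤ K e^{βt}‖x‖ for t ≥ 0. Let z : ℝ → ℝ be continuous with δ := sup_t |z(t)| satisfying β + δ < η < α − δ for some η, let G : [0,∞) × ℝⁿ → ℝⁿ be continuous and Lipschitz in its second variable, and Φ : [0,∞) → ℝⁿ continuous. If ψ : [0,∞) → ℝⁿ is a differentiable solution of ψ'(t) = A ψ(t) + z(t) ψ(t) + G(t, ψ(t)+Φ(t)) − G(t, Φ(t)) with sup_{t ≥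 0} e^{−ηt − ∫₀ᵗ z(τ)dτ}‖ψ(t)‖ < ∞, then ψ satisfies, for all t ≥ 0, ψ(t) = e^{At + ∫₀ᵗ z(s)ds} Pˢψ(0) + ∫₀ᵗ e^{A(t−s) + ∫ₛᵗ z(r)dr} Pˢ [G(s, ψ(s)+Φ(s)) − G(s, Φ(s))] ds − ∫_t^∞ e^{A(t−s) + ∫ₛᵗ z(r)dr} Pᵘ [G(s, ψ(s)+Φ(s)) − G(s, Φ(s))] ds, with all integrals absolutely convergent. -/
/-!
Along a solution of `ψ' = Aψ + z ψ + g`, the function `s ↦ e^{∫ₛᵇ z} e^{(b-s)A} ψ(s)` has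
derivative `e^{∫ₛᵇ z} e^{(b-s)A} g(s)`, which gives the variation-of-constants formula between
any two times. Applying `Pˢ` to it between `0` and `t` gives the stable component. For the
unstable component, apply `Pᵘ` to it between `T ≥ t` and `t`: the dichotomy bound at the
negative time `t - T` and the growth `e^{ηT + ∫₀ᵀ z}` of `ψ` make the boundary term
`O(e^{-(α-η)T})`, and `η < α` lets `T → ∞`.
-/

open MeasureTheory Set Filter Topology

theorem Continuous.hasDerivAt_integral_left {z : ℝ → ℝ} (hz : Continuous z) (t s : ℝ) :
    HasDerivAt (fun u => ∫ r in u..t, z r) (-z s) s :=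
  intervalIntegral.integral_hasDerivAt_left (hz.intervalIntegrable s t)
    (hz.stronglyMeasurableAtFilter _ _) hz.continuousAt

section

variable {E : Type*} [NormedAddCommGroup E]

theorem integrableOn_Ioi_of_norm_le_exp {f : ℝ → E} {t c C : ℝ} (hf : ContinuousOn f (Ioi t))
    (hc : 0 < c) (hbound : ∀ s > t, ‖f s‖ ≤ C * Real.exp (-c * s)) :
    IntegrableOn f (Ioi t) :=
  ((exp_neg_integrableOn_Ioi t hc).const_mul C).mono' (hf.aestronglyMeasurable measurableSet_Ioi)
    ((ae_restrict_iff' measurableSet_Ioi).2 (Eventually.of_forall hbound))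

theorem tendsto_zero_of_norm_le_exp {f : ℝ → E} {c C : ℝ} (hc : 0 < c)
    (hbound : ∀ᶠ T in atTop, ‖f T‖ ≤ C * Real.exp (-c * T)) : Tendsto f atTop (𝓝 0) := by
  have hexp : Tendsto (fun T => Real.exp (-c * T)) atTop (𝓝 0) :=
    Real.tendsto_exp_atBot.comp (tendsto_id.const_mul_atTop_of_neg (neg_neg_of_pos hc))
  simpa using squeeze_zero_norm' hbound (by simpa using hexp.const_mul C)

theorem eq_neg_integral_Ioi_of_eq_add_integral [NormedSpace ℝ E] [CompleteSpace E] {x : E}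
    {b h : ℝ → E} {t : ℝ}
    (hh : IntegrableOn h (Ioi t)) (hb : Tendsto b atTop (𝓝 0))
    (hx : ∀ T ≥ t, x = b T + ∫ s in T..t, h s) : x = -∫ s in Ioi t, h s := by
  have hlim := hb.sub (intervalIntegral_tendsto_integral_Ioi t hh tendsto_id)
  rw [zero_sub] at hlim
  refine tendsto_nhds_unique (tendsto_const_nhds.congr' ?_) hlim
  filter_upwards [eventually_ge_atTop t] with T hT
  rw [hx T hT, intervalIntegral.integral_symm, id, sub_eq_add_neg]

theorem ContinuousOn.sub_comp_add {G : ℝ → E → E} {S : Set ℝ}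
    (hG : ContinuousOn (fun p : ℝ × E => G p.1 p.2) (S ×ˢ univ)) {ψ Φ : ℝ → E}
    (hψ : ContinuousOn ψ S) (hΦ : ContinuousOn Φ S) :
    ContinuousOn (fun s => G s (ψ s + Φ s) - G s (Φ s)) S :=
  (hG.comp (continuousOn_id.prodMk (hψ.add hΦ)) fun _ hs => ⟨hs, trivial⟩).sub
    (hG.comp (continuousOn_id.prodMk hΦ) fun _ hs => ⟨hs, trivial⟩)

end

section

variable {E : Type*} [NormedAddCommGroup E] [NormedSpace ℝ E]

theorem ContinuousLinearMap.comp_comm_of_add_eq_id {T P Q : E →L[ℝ] E}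
    (hPQ : P + Q = ContinuousLinearMap.id ℝ E) (hQ : T.comp Q = Q.comp T) :
    T.comp P = P.comp T := by
  rw [eq_sub_of_add_eq hPQ, comp_sub, sub_comp, hQ, comp_id, id_comp]

theorem norm_exp_integral_smul_exp_apply_le {A Pu : E →L[ℝ] E} {K α : ℝ} (hK : 0 ≤ K)
    (hdichU : ∀ τ ≤ (0:ℝ), ∀ x,
      ‖NormedSpace.exp (τ • A) (Pu x)‖ ≤ K * Real.exp (α * τ) * ‖x‖)
    {z : ℝ → ℝ} (hz : Continuous z) {η M t s : ℝ} {x : E} (hts : t ≤ s)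
    (hx : Real.exp (-(η * s) - ∫ r in (0:ℝ)..s, z r) * ‖x‖ ≤ M) :
    ‖Real.exp (∫ r in s..t, z r) • NormedSpace.exp ((t - s) • A) (Pu x)‖
      ≤ K * M * Real.exp (α * t + ∫ r in (0:ℝ)..t, z r) * Real.exp (-(α - η) * s) := by
  set Zt := ∫ r in (0:ℝ)..t, z r
  set Zs := ∫ r in (0:ℝ)..s, z r
  have hsplit : ∫ r in s..t, z r = Zt - Zs :=
    (intervalIntegral.integral_interval_sub_left (hz.intervalIntegrable 0 t)
      (hz.intervalIntegrable 0 s)).symm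
  have hx' : ‖x‖ ≤ Real.exp (η * s + Zs) * M :=
    calc ‖x‖ = Real.exp (η * s + Zs) * (Real.exp (-(η * s) - Zs) * ‖x‖) := by
          rw [← mul_assoc, ← Real.exp_add, show η * s + Zs + (-(η * s) - Zs) = 0 by ring,
            Real.exp_zero, one_mul]
      _ ≤ Real.exp (η * s + Zs) * M := by gcongr
  calc ‖Real.exp (∫ r in s..t, z r) • NormedSpace.exp ((t - s) • A) (Pu x)‖
      = Real.exp (Zt - Zs) * ‖NormedSpace.exp ((t - s) • A) (Pu x)‖ := by
        rw [norm_smul, Real.norm_of_nonneg (Real.exp_pos _).le, hsplit]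
    _ ≤ Real.exp (Zt - Zs) * (K * Real.exp (α * (t - s)) * (Real.exp (η * s + Zs) * M)) := by
        gcongr
        exact (hdichU _ (by linarith) x).trans (by gcongr)
    _ = K * M * Real.exp ((Zt - Zs) + α * (t - s) + (η * s + Zs)) := by
        simp only [Real.exp_add]; ring
    _ = K * M * Real.exp (α * t + Zt) * Real.exp (-(α - η) * s) := by
        rw [mul_assoc (K * M), ← Real.exp_add]
        ring_nf

variable [CompleteSpace E]

theorem hasDerivAt_exp_sub_smul (A : E →L[ℝ] E) (b s : ℝ) :
    HasDerivAt (fun u : ℝ => NormedSpace.exp ((b - u) • A))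
      (-(NormedSpace.exp ((b - s) • A) * A)) s :=
  ((hasDerivAt_exp_smul_const A (b - s)).scomp s ((hasDerivAt_id s).const_sub b)).congr_deriv
    (neg_one_smul ℝ _)

theorem continuousOn_exp_integral_smul_exp_apply (A : E →L[ℝ] E) {z : ℝ → ℝ} (hz : Continuous z)
    {g : ℝ → E} {S : Set ℝ} (hg : ContinuousOn g S) (t : ℝ) :
    ContinuousOn (fun s => Real.exp (∫ r in s..t, z r) •
      NormedSpace.exp ((t - s) • A) (g s)) S := by
  have hZ : Continuous fun s => ∫ r in s..t, z r :=
    continuous_iff_continuousAt.2 fun s => (hz.hasDerivAt_integral_left t s).continuousAt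
  have hexp : Continuous fun s : ℝ => NormedSpace.exp ((t - s) • A) :=
    continuous_iff_continuousAt.2 fun s => (hasDerivAt_exp_sub_smul A t s).continuousAt
  exact hZ.rexp.continuousOn.smul (hexp.continuousOn.clm_apply hg)

theorem variation_of_constants (A : E →L[ℝ] E) {z : ℝ → ℝ} (hz : Continuous z) {ψ g : ℝ → E}
    {a b : ℝ} (hψ : ∀ s ∈ uIcc a b, HasDerivAt ψ (A (ψ s) + z s • ψ s + g s) s)
    (hg : ContinuousOn g (uIcc a b)) :
    ψ b = Real.exp (∫ r in a..b, z r) • NormedSpace.exp ((b - a) • A) (ψ a)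
      + ∫ s in a..b, Real.exp (∫ r in s..b, z r) • NormedSpace.exp ((b - s) • A) (g s) := by
  set F := fun s => Real.exp (∫ r in s..b, z r) • NormedSpace.exp ((b - s) • A) (ψ s)
  have hF : ∀ s ∈ uIcc a b, HasDerivAt F
      (Real.exp (∫ r in s..b, z r) • NormedSpace.exp ((b - s) • A) (g s)) s := by
    intro s hs
    refine ((hz.hasDerivAt_integral_left b s).exp.smul
      ((hasDerivAt_exp_sub_smul A b s).clm_apply (hψ s hs))).congr_deriv ?_
    simp only [neg_apply, mul_apply_eq_comp, map_add, map_smul]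
    module
  have hFTC := intervalIntegral.integral_eq_sub_of_hasDerivAt hF
    ((continuousOn_exp_integral_smul_exp_apply A hz hg b).intervalIntegrable)
  simp only [F, sub_self, zero_smul, NormedSpace.exp_zero, intervalIntegral.integral_same,
    Real.exp_zero, one_smul, one_apply_eq_self] at hFTC
  rw [hFTC]
  abel

theorem map_variation_of_constants (A P : E →L[ℝ] E)
    (hP : ∀ τ : ℝ, (NormedSpace.exp (τ • A)).comp P = P.comp (NormedSpace.exp (τ • A)))
    {z : ℝ → ℝ} (hz : Continuous z) {ψ g : ℝ → E} {a b : ℝ}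
    (hψ : ∀ s ∈ uIcc a b, HasDerivAt ψ (A (ψ s) + z s • ψ s + g s) s)
    (hg : ContinuousOn g (uIcc a b)) :
    P (ψ b) = Real.exp (∫ r in a..b, z r) • NormedSpace.exp ((b - a) • A) (P (ψ a))
      + ∫ s in a..b, Real.exp (∫ r in s..b, z r) • NormedSpace.exp ((b - s) • A) (P (g s)) := by
  have hP' : ∀ τ x, NormedSpace.exp (τ • A) (P x) = P (NormedSpace.exp (τ • A) x) := fun τ x =>
    DFunLike.congr_fun (hP τ) x
  rw [variation_of_constants A hz hψ hg, map_add, map_smul, hP', ← P.intervalIntegral_comp_comm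
    (continuousOn_exp_integral_smul_exp_apply A hz hg b).intervalIntegrable]
  simp only [map_smul, hP']

theorem unstable_component_eq_neg_integral_Ioi (A Pu : E →L[ℝ] E)
    (hcomm : ∀ τ : ℝ, (NormedSpace.exp (τ • A)).comp Pu = Pu.comp (NormedSpace.exp (τ • A)))
    {K α : ℝ} (hK : 0 ≤ K)
    (hdichU : ∀ τ ≤ (0:ℝ), ∀ x,
      ‖NormedSpace.exp (τ • A) (Pu x)‖ ≤ K * Real.exp (α * τ) * ‖x‖)
    {z : ℝ → ℝ} (hz : Continuous z) {η : ℝ} (hηα : η < α) {ψ g : ℝ → E}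
    (hψ : ∀ s ≥ (0:ℝ), HasDerivAt ψ (A (ψ s) + z s • ψ s + g s) s)
    (hg : ContinuousOn g (Ici 0)) {M N : ℝ}
    (hψM : ∀ s ≥ (0:ℝ), Real.exp (-(η * s) - ∫ r in (0:ℝ)..s, z r) * ‖ψ s‖ ≤ M)
    (hgN : ∀ s ≥ (0:ℝ), Real.exp (-(η * s) - ∫ r in (0:ℝ)..s, z r) * ‖g s‖ ≤ N)
    {t : ℝ} (ht : 0 ≤ t) :
    IntegrableOn
        (fun s => Real.exp (∫ r in s..t, z r) • NormedSpace.exp ((t - s) • A) (Pu (g s))) (Ioi t)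
      ∧ Pu (ψ t) = -∫ s in Ioi t,
          Real.exp (∫ r in s..t, z r) • NormedSpace.exp ((t - s) • A) (Pu (g s)) := by
  have hαη : 0 < α - η := sub_pos.2 hηα
  have hint : IntegrableOn
      (fun s => Real.exp (∫ r in s..t, z r) • NormedSpace.exp ((t - s) • A) (Pu (g s))) (Ioi t) :=
    integrableOn_Ioi_of_norm_le_exp
      ((continuousOn_exp_integral_smul_exp_apply A hz (Pu.continuous.comp_continuousOn hg) t).mono
        fun s hs => ht.trans (le_of_lt hs))
      hαη fun s hs =>
        norm_exp_integral_smul_exp_apply_le hK hdichU hz hs.le (hgN s (ht.trans hs.le))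
  refine ⟨hint, eq_neg_integral_Ioi_of_eq_add_integral hint
    (b := fun T => Real.exp (∫ r in T..t, z r) • NormedSpace.exp ((t - T) • A) (Pu (ψ T))) ?_
    fun T hT => ?_⟩
  · exact tendsto_zero_of_norm_le_exp hαη ((eventually_ge_atTop t).mono fun T hT =>
      norm_exp_integral_smul_exp_apply_le hK hdichU hz hT (hψM T (ht.trans hT)))
  · have hsub : uIcc T t ⊆ Ici 0 := ordConnected_Ici.uIcc_subset (mem_Ici.2 (ht.trans hT)) ht
    exact map_variation_of_constants A Pu hcomm hz (fun s hs => hψ s (hsub hs)) (hg.mono hsub)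

end

theorem ode_implies_lyapunov_perron_general
    {n : ℕ} (A : EuclideanSpace ℝ (Fin n) →L[ℝ] EuclideanSpace ℝ (Fin n))
    (Ps Pu : EuclideanSpace ℝ (Fin n) →L[ℝ] EuclideanSpace ℝ (Fin n))
    (hcompl : Ps + Pu = ContinuousLinearMap.id ℝ (EuclideanSpace ℝ (Fin n)))
    (hcomm : ∀ t : ℝ, (NormedSpace.exp (t • A)).comp Pu
      = Pu.comp (NormedSpace.exp (t • A)))
    (K α : ℝ) (hK : 0 < K)
    (hdichU : ∀ t ≤ (0:ℝ), ∀ x,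
      ‖NormedSpace.exp (t • A) (Pu x)‖ ≤ K * Real.exp (α * t) * ‖x‖)
    (z : ℝ → ℝ) (hz : Continuous z)
    (δ η : ℝ) (hδ : ∀ t : ℝ, |z t| ≤ δ)
    (hη₂ : η < α - δ)
    (G : ℝ → EuclideanSpace ℝ (Fin n) → EuclideanSpace ℝ (Fin n))
    (hGcont : ContinuousOn (fun p : ℝ × EuclideanSpace ℝ (Fin n) => G p.1 p.2)
      (Set.Ici 0 ×ˢ Set.univ))
    (L : ℝ) (hGLip : ∀ t ∈ Set.Ici (0:ℝ), ∀ x y, ‖G t x - G t y‖ ≤ L * ‖x - y‖)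
    (Φ : ℝ → EuclideanSpace ℝ (Fin n)) (hΦ : ContinuousOn Φ (Set.Ici 0))
    (ψ : ℝ → EuclideanSpace ℝ (Fin n))
    (hψode : ∀ t ≥ (0:ℝ),
      HasDerivAt ψ (A (ψ t) + z t • ψ t + (G t (ψ t + Φ t) - G t (Φ t))) t)
    (hψbdd : ∃ M : ℝ, ∀ t ≥ (0:ℝ),
      Real.exp (-(η * t) - ∫ τ in (0:ℝ)..t, z τ) * ‖ψ t‖ ≤ M) :
    ∀ t ≥ (0:ℝ),
      IntervalIntegrable
        (fun s => Real.exp (∫ r in s..t, z r) •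
          (NormedSpace.exp ((t - s) • A)) (Ps (G s (ψ s + Φ s) - G s (Φ s))))
        MeasureTheory.volume 0 t
      ∧ IntegrableOn
          (fun s => Real.exp (∫ r in s..t, z r) •
            (NormedSpace.exp ((t - s) • A)) (Pu (G s (ψ s + Φ s) - G s (Φ s))))
          (Set.Ioi t)
      ∧ ψ t = Real.exp (∫ s in (0:ℝ)..t, z s) • (NormedSpace.exp (t • A)) (Ps (ψ 0))
          + (∫ s in (0:ℝ)..t, Real.exp (∫ r in s..t, z r) •
              (NormedSpace.exp ((t - s) • A)) (Ps (G s (ψ s + Φ s) - G s (Φ s))))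
          - ∫ s in Set.Ioi t, Real.exp (∫ r in s..t, z r) •
              (NormedSpace.exp ((t - s) • A)) (Pu (G s (ψ s + Φ s) - G s (Φ s))) := by
  intro t ht
  obtain ⟨M, hM⟩ := hψbdd
  set g := fun s => G s (ψ s + Φ s) - G s (Φ s)
  have hgcont : ContinuousOn g (Ici 0) := hGcont.sub_comp_add
    (fun s hs => (hψode s hs).continuousAt.continuousWithinAt) hΦ
  have hgM : ∀ s ≥ (0:ℝ), Real.exp (-(η * s) - ∫ r in (0:ℝ)..s, z r) * ‖g s‖ ≤ |L| * M := by
    intro s hs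
    have hLip := hGLip s hs (ψ s + Φ s) (Φ s)
    rw [add_sub_cancel_right] at hLip
    calc Real.exp (-(η * s) - ∫ r in (0:ℝ)..s, z r) * ‖g s‖
        ≤ |L| * (Real.exp (-(η * s) - ∫ r in (0:ℝ)..s, z r) * ‖ψ s‖) := by
          rw [mul_left_comm]; gcongr; exact hLip.trans (by gcongr; exact le_abs_self L)
      _ ≤ |L| * M := by gcongr; exact hM s hs
  have hηα : η < α := by linarith [(abs_nonneg (z 0)).trans (hδ 0)]
  obtain ⟨hint, hunstable⟩ := unstable_component_eq_neg_integral_Ioi A Pu hcomm hK.le hdichU hz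
    hηα hψode hgcont hM hgM ht
  have hsub : uIcc 0 t ⊆ Ici 0 := ordConnected_Ici.uIcc_subset self_mem_Ici ht
  have hstable := map_variation_of_constants A Ps
    (fun τ => ContinuousLinearMap.comp_comm_of_add_eq_id hcompl (hcomm τ)) hz
    (fun s hs => hψode s (hsub hs)) (hgcont.mono hsub)
  refine ⟨((continuousOn_exp_integral_smul_exp_apply A hz (Ps.continuous.comp_continuousOn hgcont)
    t).mono hsub).intervalIntegrable, hint, ?_⟩
  have hsplit : ψ t = Ps (ψ t) + Pu (ψ t) := by simpa using (DFunLike.congr_fun hcompl (ψ t)).symm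
  rw [hsplit, hstable, hunstable, sub_zero, sub_eq_add_neg]

/-- Converse Lyapunov–Perron characterization: a tempered solution of
`ψ' = A ψ + z(t) ψ + G(t, ψ + Φ) - G(t, Φ)` satisfies the Lyapunov–Perron
integral equation with `ξ = Pˢ ψ(0)`. -/
theorem ode_implies_lyapunov_perron
    {n : ℕ} (A : EuclideanSpace ℝ (Fin n) →L[ℝ] EuclideanSpace ℝ (Fin n))
    (Ps Pu : EuclideanSpace ℝ (Fin n) →L[ℝ] EuclideanSpace ℝ (Fin n))
    (hPs : Ps.comp Ps = Ps) (hPu : Pu.comp Pu = Pu)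
    (hcompl : Ps + Pu = ContinuousLinearMap.id ℝ (EuclideanSpace ℝ (Fin n)))
    (hcomm : ∀ t : ℝ, (NormedSpace.exp (t • A)).comp Pu
      = Pu.comp (NormedSpace.exp (t • A)))
    (hbij : ∀ t : ℝ,
      Set.BijOn (fun x => NormedSpace.exp (t • A) x) (Set.range Pu) (Set.range Pu))
    (K α β : ℝ) (hK : 0 < K) (hα : 0 < α) (hβ : β < 0)
    (hdichU : ∀ t ≤ (0:ℝ), ∀ x,
      ‖NormedSpace.exp (t • A) (Pu x)‖ ≤ K * Real.exp (α * t) * ‖x‖)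
    (hdichS : ∀ t ≥ (0:ℝ), ∀ x,
      ‖NormedSpace.exp (t • A) (Ps x)‖ ≤ K * Real.exp (β * t) * ‖x‖)
    (z : ℝ → ℝ) (hz : Continuous z)
    (δ η : ℝ) (hδ : ∀ t : ℝ, |z t| ≤ δ)
    (hη₁ : β + δ < η) (hη₂ : η < α - δ)
    (G : ℝ → EuclideanSpace ℝ (Fin n) → EuclideanSpace ℝ (Fin n))
    (hGcont : ContinuousOn (fun p : ℝ × EuclideanSpace ℝ (Fin n) => G p.1 p.2)
      (Set.Ici 0 ×ˢ Set.univ))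
    (L : ℝ) (hGLip : ∀ t ∈ Set.Ici (0:ℝ), ∀ x y, ‖G t x - G t y‖ ≤ L * ‖x - y‖)
    (Φ : ℝ → EuclideanSpace ℝ (Fin n)) (hΦ : ContinuousOn Φ (Set.Ici 0))
    (ψ : ℝ → EuclideanSpace ℝ (Fin n))
    (hψode : ∀ t ≥ (0:ℝ),
      HasDerivAt ψ (A (ψ t) + z t • ψ t + (G t (ψ t + Φ t) - G t (Φ t))) t)
    (hψbdd : ∃ M : ℝ, ∀ t ≥ (0:ℝ),
      Real.exp (-(η * t) - ∫ τ in (0:ℝ)..t, z τ) * ‖ψ t‖ ≤ M) :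
    ∀ t ≥ (0:ℝ),
      IntervalIntegrable
        (fun s => Real.exp (∫ r in s..t, z r) •
          (NormedSpace.exp ((t - s) • A)) (Ps (G s (ψ s + Φ s) - G s (Φ s))))
        MeasureTheory.volume 0 t
      ∧ IntegrableOn
          (fun s => Real.exp (∫ r in s..t, z r) •
            (NormedSpace.exp ((t - s) • A)) (Pu (G s (ψ s + Φ s) - G s (Φ s))))
          (Set.Ioi t)
      ∧ ψ t = Real.exp (∫ s in (0:ℝ)..t, z s) • (NormedSpace.exp (t • A)) (Ps (ψ 0))
          + (∫ s in (0:ℝ)..t, Real.exp (∫ r in s..t, z r) •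
              (NormedSpace.exp ((t - s) • A)) (Ps (G s (ψ s + Φ s) - G s (Φ s))))
          - ∫ s in Set.Ioi t, Real.exp (∫ r in s..t, z r) •
              (NormedSpace.exp ((t - s) • A)) (Pu (G s (ψ s + Φ s) - G s (Φ s))) :=
  ode_implies_lyapunov_perron_general A Ps Pu hcompl hcomm K α hK hdichU z hz δ η hδ hη₂ G hGcont L
    hGLip Φ hΦ ψ hψode hψbdd
end

section
/- Let Z : [0,∞) → ℝ be continuous and bounded and let ε ≥ 0 satisfy ε·sup_t |Z(t)| < 1. For initial data p = (x₀,y₀) and p̃ = (x̃₀,ỹ₀), let (x(t),y(t)) and (x̃(t),ỹ(t)) be the solutions on [0,∞) of the system ẋ = −x + εZ(t)x, ẏ = y + εZ(t)y + e^{εZ(t)} x² with these initial data. Set K := ∫₀^∞ e^{−3s + ε∫₀ˢ Z(r)dr + εZ(s)} ds (which converges). Then (x̃(t) − x(t), ỹ(t) − y(t)) → 0 as t → ∞ if and only if ỹ₀ − y₀ = −(x̃₀² − x₀²) K; moreover in that case the difference decays exponentially. -/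
/-!
With `I(t) = ∫₀ᵗ Z`, the first equation is linear, so `x(t) = x₀ e^{-t+εI(t)}`, and variation of
constants turns the second into `y(t) = (y₀ + x₀² ∫₀ᵗ g) e^{t+εI(t)}`, where `g` is the integrand
of `K`. Hence `ỹ - y = (ỹ₀ - y₀ + (x̃₀² - x₀²) ∫₀ᵗ g) e^{t+εI(t)}`. As `εM < 1`, the factor
`e^{t+εI(t)}` grows at least like `e^{(1-εM)t}`, so the difference can only vanish at infinity
if the bracket tends to `ỹ₀ - y₀ + (x̃₀² - x₀²)K = 0`. Conversely the bracket is then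
`-(x̃₀² - x₀²) ∫ₜ^∞ g = O(e^{-(3-εM)t})`, which beats the growth `e^{(1+εM)t}`.
-/

open Filter MeasureTheory Set Real Topology

theorem hasDerivWithinAt_integral_Ici {E : Type*} [NormedAddCommGroup E] [NormedSpace ℝ E]
    [CompleteSpace E] {f : ℝ → E} {a t : ℝ} (hf : ContinuousOn f (Ici a)) (ht : a ≤ t) :
    HasDerivWithinAt (fun u => ∫ r in a..u, f r) (f t) (Ici a) t := by
  have hint : IntervalIntegrable f volume a t :=
    (hf.mono (by simp [uIcc_of_le ht, Icc_subset_Ici_self])).intervalIntegrable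
  rcases ht.eq_or_lt with rfl | hlt
  · exact intervalIntegral.integral_hasDerivWithinAt_right hint
      ((hf.mono Ioi_subset_Ici_self).stronglyMeasurableAtFilter_nhdsWithin measurableSet_Ioi a)
      ((hf a self_mem_Ici).mono Ioi_subset_Ici_self)
  · exact (intervalIntegral.integral_hasDerivAt_right hint
      ((hf.mono Ioi_subset_Ici_self).stronglyMeasurableAtFilter isOpen_Ioi t hlt)
      (hf.continuousAt (Ici_mem_nhds hlt))).hasDerivWithinAt

theorem variation_of_constants_s12 {p q A v : ℝ → ℝ} {a t : ℝ}
    (hA : ∀ s ∈ Ici a, HasDerivWithinAt A (p s) (Ici a) s) (hq : ContinuousOn q (Ici a))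
    (hv : ∀ s ∈ Ici a, HasDerivWithinAt v (p s * v s + q s) (Ici a) s) (ht : a ≤ t) :
    v t = (v a * exp (-A a) + ∫ s in a..t, q s * exp (-A s)) * exp (A t) := by
  have hqA : ContinuousOn (fun s => q s * exp (-A s)) (Ici a) :=
    hq.mul (fun s hs => (hA s hs).continuousWithinAt.neg.rexp)
  set φ := fun s => v s * exp (-A s) - ∫ r in a..s, q r * exp (-A r)
  have hφ : ∀ s ∈ Ici a, HasDerivWithinAt φ 0 (Ici a) s := fun s hs =>
    (((hv s hs).mul (hA s hs).neg.exp).sub (hasDerivWithinAt_integral_Ici hqA hs)).congr_deriv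
      (by simp only [Pi.neg_apply]; ring)
  have hconst : φ t = φ a := constant_of_has_deriv_right_zero
    (fun s hs => (hφ s hs.1).continuousWithinAt.mono Icc_subset_Ici_self)
    (fun s hs => (hφ s hs.1).mono (Ici_subset_Ici.2 hs.1)) t ⟨ht, le_rfl⟩
  simp only [φ, intervalIntegral.integral_same, sub_zero] at hconst
  rw [← hconst, sub_add_cancel, mul_assoc, ← exp_add, neg_add_cancel, exp_zero, mul_one]

theorem norm_setIntegral_Ioi_le_exp {E : Type*} [NormedAddCommGroup E] [NormedSpace ℝ E]
    {g : ℝ → E} {C b t : ℝ} (hb : 0 < b)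
    (hle : ∀ s ∈ Ioi t, ‖g s‖ ≤ C * exp (-b * s)) :
    ‖∫ s in Ioi t, g s‖ ≤ C / b * exp (-b * t) := by
  calc ‖∫ s in Ioi t, g s‖ ≤ ∫ s in Ioi t, C * exp (-b * s) :=
        norm_integral_le_of_norm_le ((integrableOn_exp_mul_Ioi (by linarith) t).const_mul C)
          ((ae_restrict_iff' measurableSet_Ioi).2 (.of_forall hle))
    _ = C / b * exp (-b * t) := by
        rw [integral_const_mul, integral_exp_mul_Ioi (by linarith)]
        field_simp

theorem tendsto_zero_of_norm_le_exp_s12 {E : Type*} [SeminormedAddCommGroup E] {f : ℝ → E}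
    {C c : ℝ} (hc : 0 < c) (h : ∀ t ≥ 0, ‖f t‖ ≤ C * exp (-c * t)) :
    Tendsto f atTop (𝓝 0) := by
  have hexp : Tendsto (fun t => C * exp (-c * t)) atTop (𝓝 0) := by
    simpa using (tendsto_exp_atBot.comp
      (tendsto_id.const_mul_atTop_of_neg (neg_lt_zero.2 hc))).const_mul C
  exact squeeze_zero_norm' ((eventually_ge_atTop 0).mono h) hexp

theorem eq_zero_of_tendsto_mul_of_tendsto_atTop {α : Type*} {l : Filter α} [l.NeBot]
    {F E : α → ℝ} {L : ℝ} (hF : Tendsto F l (𝓝 L)) (hE : Tendsto E l atTop)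
    (h : Tendsto (fun t => F t * E t) l (𝓝 0)) : L = 0 := by
  rcases lt_trichotomy L 0 with hL | hL | hL
  · exact absurd h (not_tendsto_nhds_of_tendsto_atBot (hF.neg_mul_atTop hL hE) 0)
  · exact hL
  · exact absurd h (not_tendsto_nhds_of_tendsto_atTop (hF.pos_mul_atTop hL hE) 0)

namespace StableLeaf

variable {φ G u w : ℝ → ℝ} {δ b C K a D B : ℝ}

theorem exists_norm_le_exp (hδ : δ < 1) (hb : 1 + δ < b)
    (hφ : ∀ t ≥ 0, |φ t| ≤ δ * t) (hG : ∀ t ≥ 0, |K - G t| ≤ C * exp (-b * t))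
    (hu : ∀ t ≥ 0, u t = a * exp (-t + φ t))
    (hw : ∀ t ≥ 0, w t = (D + B * G t) * exp (t + φ t)) (hleaf : D = -B * K) :
    ∃ C' c : ℝ, 0 < c ∧ ∀ t ≥ 0, ‖(u t, w t)‖ ≤ C' * exp (-c * t) := by
  refine ⟨max |a| (|B| * C), min (1 - δ) (b - 1 - δ), lt_min (by linarith) (by linarith), ?_⟩
  intro t ht
  have hφt := abs_le.1 (hφ t ht)
  have hu' : |u t| ≤ |a| * exp (-min (1 - δ) (b - 1 - δ) * t) := by
    rw [hu t ht, abs_mul, abs_exp]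
    gcongr
    nlinarith [min_le_left (1 - δ) (b - 1 - δ)]
  have hC : 0 ≤ C := by simpa using (abs_nonneg _).trans (hG 0 le_rfl)
  have hw' : |w t| ≤ |B| * C * exp (-min (1 - δ) (b - 1 - δ) * t) := by
    rw [hw t ht, hleaf, show -B * K + B * G t = -B * (K - G t) by ring, abs_mul, abs_mul,
      abs_neg, abs_exp, mul_assoc, mul_assoc]
    refine mul_le_mul_of_nonneg_left ?_ (abs_nonneg B)
    calc |K - G t| * exp (t + φ t) ≤ C * exp (-b * t) * exp (t + δ * t) := by
          gcongr
          exacts [hG t ht, hφt.2]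
      _ = C * exp (-(b - 1 - δ) * t) := by rw [mul_assoc, ← exp_add]; ring_nf
      _ ≤ C * exp (-min (1 - δ) (b - 1 - δ) * t) := by
          gcongr
          nlinarith [min_le_right (1 - δ) (b - 1 - δ)]
  rw [Prod.norm_def, Real.norm_eq_abs, Real.norm_eq_abs]
  exact max_le (hu'.trans (by gcongr; exact le_max_left _ _))
    (hw'.trans (by gcongr; exact le_max_right _ _))

theorem tendsto_iff (hδ : δ < 1) (hb : 1 + δ < b)
    (hφ : ∀ t ≥ 0, |φ t| ≤ δ * t) (hG : ∀ t ≥ 0, |K - G t| ≤ C * exp (-b * t))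
    (hu : ∀ t ≥ 0, u t = a * exp (-t + φ t))
    (hw : ∀ t ≥ 0, w t = (D + B * G t) * exp (t + φ t)) :
    Tendsto (fun t => (u t, w t)) atTop (𝓝 (0, 0)) ↔ D = -B * K := by
  refine ⟨fun h => ?_, fun hleaf => ?_⟩
  · have hδ0 : 0 ≤ δ := by simpa using (abs_nonneg _).trans (hφ 1 zero_le_one)
    have hGK : Tendsto G atTop (𝓝 K) := by
      have hb0 : 0 < b := by linarith
      simpa using (tendsto_const_nhds (x := K)).sub (tendsto_zero_of_norm_le_exp_s12
        (f := fun t => K - G t) hb0 fun t ht => (norm_eq_abs _).trans_le (hG t ht))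
    have hE : Tendsto (fun t => exp (t + φ t)) atTop atTop := by
      refine tendsto_exp_atTop.comp (tendsto_atTop_mono' atTop ?_
        (tendsto_id.const_mul_atTop (sub_pos.2 hδ)))
      filter_upwards [eventually_ge_atTop 0] with t ht
      show (1 - δ) * t ≤ t + φ t
      nlinarith [abs_le.1 (hφ t ht)]
    have hw0 : Tendsto (fun t => (D + B * G t) * exp (t + φ t)) atTop (𝓝 0) :=
      h.snd_nhds.congr' ((eventually_ge_atTop 0).mono hw)
    have := eq_zero_of_tendsto_mul_of_tendsto_atTop
      (tendsto_const_nhds.add (hGK.const_mul B)) hE hw0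
    linarith
  · obtain ⟨C', c, hc, hle⟩ := exists_norm_le_exp hδ hb hφ hG hu hw hleaf
    exact tendsto_zero_of_norm_le_exp_s12 hc hle

end StableLeaf

theorem abs_intervalIntegral_le_mul {Z : ℝ → ℝ} {M t : ℝ} (hZ : ∀ r, |Z r| ≤ M) (ht : 0 ≤ t) :
    |∫ r in (0:ℝ)..t, Z r| ≤ M * t := by
  simpa [abs_of_nonneg ht] using
    intervalIntegral.norm_integral_le_of_norm_le_const (a := 0) (b := t)
      fun r _ => (norm_eq_abs _).trans_le (hZ r)

namespace RandomPlanar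

variable {Z : ℝ → ℝ} {ε M : ℝ}

noncomputable def kernel (ε : ℝ) (Z : ℝ → ℝ) (s : ℝ) : ℝ :=
  exp (-3 * s + ε * (∫ r in (0:ℝ)..s, Z r) + ε * Z s)

theorem abs_mul_integral_le (hε : 0 ≤ ε) (hZ : ∀ r, |Z r| ≤ M) {t : ℝ} (ht : 0 ≤ t) :
    |ε * ∫ r in (0:ℝ)..t, Z r| ≤ ε * M * t := by
  rw [abs_mul, abs_of_nonneg hε, mul_assoc]
  exact mul_le_mul_of_nonneg_left (abs_intervalIntegral_le_mul hZ ht) hε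

theorem norm_kernel_le (hε : 0 ≤ ε) (hZ : ∀ r, |Z r| ≤ M) {s : ℝ} (hs : 0 ≤ s) :
    ‖kernel ε Z s‖ ≤ exp (ε * M) * exp (-(3 - ε * M) * s) := by
  rw [norm_eq_abs, kernel, abs_exp, ← exp_add, exp_le_exp]
  have hI := (abs_le.1 (abs_mul_integral_le hε hZ hs)).2
  have hZs : ε * Z s ≤ ε * M := mul_le_mul_of_nonneg_left (abs_le.1 (hZ s)).2 hε
  linarith

theorem continuousOn_kernel (hZ : ContinuousOn Z (Ici 0)) :
    ContinuousOn (kernel ε Z) (Ici 0) := by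
  have hI : ContinuousOn (fun s => ∫ r in (0:ℝ)..s, Z r) (Ici 0) := fun s hs =>
    (hasDerivWithinAt_integral_Ici hZ hs).continuousWithinAt
  unfold kernel
  fun_prop

theorem integrableOn_kernel (hε : 0 ≤ ε) (hεM : ε * M < 1) (hZc : ContinuousOn Z (Ici 0))
    (hZ : ∀ r, |Z r| ≤ M) : IntegrableOn (kernel ε Z) (Ioi 0) :=
  ((integrableOn_exp_mul_Ioi (by linarith) 0).const_mul _).mono'
    ((continuousOn_kernel hZc).mono Ioi_subset_Ici_self |>.aestronglyMeasurable
      measurableSet_Ioi)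
    ((ae_restrict_iff' measurableSet_Ioi).2
      (.of_forall fun s hs => norm_kernel_le hε hZ (le_of_lt hs)))

theorem abs_integral_Ioi_sub_kernel_le (hε : 0 ≤ ε) (hεM : ε * M < 1)
    (hZc : ContinuousOn Z (Ici 0)) (hZ : ∀ r, |Z r| ≤ M) {t : ℝ} (ht : 0 ≤ t) :
    |(∫ s in Ioi 0, kernel ε Z s) - ∫ s in (0:ℝ)..t, kernel ε Z s|
      ≤ exp (ε * M) / (3 - ε * M) * exp (-(3 - ε * M) * t) := by
  rw [← intervalIntegral.integral_Ioi_sub_Ioi (integrableOn_kernel hε hεM hZc hZ) ht,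
    sub_sub_cancel, ← norm_eq_abs]
  exact norm_setIntegral_Ioi_le_exp (by linarith)
    fun s hs => norm_kernel_le hε hZ (ht.trans (le_of_lt hs))

theorem x_eq (hZc : ContinuousOn Z (Ici 0)) {x : ℝ → ℝ}
    (hx : ∀ t ∈ Ici (0:ℝ), HasDerivWithinAt x (-(x t) + ε * Z t * x t) (Ici 0) t)
    {t : ℝ} (ht : 0 ≤ t) :
    x t = x 0 * exp (-t + ε * ∫ r in (0:ℝ)..t, Z r) := by
  have hA : ∀ s ∈ Ici (0:ℝ), HasDerivWithinAt (fun s => -s + ε * ∫ r in (0:ℝ)..s, Z r)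
      (-1 + ε * Z s) (Ici 0) s := fun s hs =>
    (hasDerivWithinAt_id s _).neg.add ((hasDerivWithinAt_integral_Ici hZc hs).const_mul ε)
  simpa using variation_of_constants_s12 (p := fun s => -1 + ε * Z s) (q := fun _ => 0) hA
    continuousOn_const (fun s hs => (hx s hs).congr_deriv (by ring)) ht

theorem y_eq (hZc : ContinuousOn Z (Ici 0)) {x y : ℝ → ℝ}
    (hx : ∀ t ∈ Ici (0:ℝ), HasDerivWithinAt x (-(x t) + ε * Z t * x t) (Ici 0) t)
    (hy : ∀ t ∈ Ici (0:ℝ),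
      HasDerivWithinAt y (y t + ε * Z t * y t + exp (ε * Z t) * (x t) ^ 2) (Ici 0) t)
    {t : ℝ} (ht : 0 ≤ t) :
    y t = (y 0 + x 0 ^ 2 * ∫ s in (0:ℝ)..t, kernel ε Z s)
      * exp (t + ε * ∫ r in (0:ℝ)..t, Z r) := by
  have hA : ∀ s ∈ Ici (0:ℝ), HasDerivWithinAt (fun s => s + ε * ∫ r in (0:ℝ)..s, Z r)
      (1 + ε * Z s) (Ici 0) s := fun s hs =>
    (hasDerivWithinAt_id s _).add ((hasDerivWithinAt_integral_Ici hZc hs).const_mul ε)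
  have hq : ContinuousOn (fun s => exp (ε * Z s) * x s ^ 2) (Ici 0) := by
    have hxc : ContinuousOn x (Ici 0) := fun s hs => (hx s hs).continuousWithinAt
    fun_prop
  have hforcing :
      ∫ s in (0:ℝ)..t, exp (ε * Z s) * x s ^ 2 * exp (-(s + ε * ∫ r in (0:ℝ)..s, Z r))
        = x 0 ^ 2 * ∫ s in (0:ℝ)..t, kernel ε Z s := by
    rw [← intervalIntegral.integral_const_mul]
    refine intervalIntegral.integral_congr fun s hs => ?_
    rw [uIcc_of_le ht] at hs
    rw [x_eq hZc hx hs.1, kernel, mul_pow, ← exp_nat_mul, mul_right_comm, mul_left_comm,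
      mul_assoc, ← exp_add, ← exp_add]
    ring_nf
  rw [variation_of_constants_s12 (p := fun s => 1 + ε * Z s) hA hq
    (fun s hs => (hy s hs).congr_deriv (by ring)) ht, hforcing]
  simp

end RandomPlanar

/-- Stable leaf of the random planar system `ẋ = -x + εZ(t)x`,
`ẏ = y + εZ(t)y + e^{εZ(t)}x²`: two orbits converge to each other iff the
initial data satisfy `ỹ₀ - y₀ = -(x̃₀² - x₀²)K`, in which case the difference
decays exponentially. -/
theorem random_planar_stable_leaf
    (Z : ℝ → ℝ) (hZcont : ContinuousOn Z (Set.Ici 0))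
    (M : ℝ) (hZbdd : ∀ t : ℝ, |Z t| ≤ M)
    (ε : ℝ) (hε : 0 ≤ ε) (hεM : ε * M < 1)
    (x₀ y₀ xt₀ yt₀ : ℝ)
    (x y xt yt : ℝ → ℝ)
    (hx : ∀ t ∈ Set.Ici (0:ℝ),
      HasDerivWithinAt x (-(x t) + ε * Z t * x t) (Set.Ici 0) t)
    (hy : ∀ t ∈ Set.Ici (0:ℝ),
      HasDerivWithinAt y (y t + ε * Z t * y t + Real.exp (ε * Z t) * (x t) ^ 2)
        (Set.Ici 0) t)
    (hxt : ∀ t ∈ Set.Ici (0:ℝ),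
      HasDerivWithinAt xt (-(xt t) + ε * Z t * xt t) (Set.Ici 0) t)
    (hyt : ∀ t ∈ Set.Ici (0:ℝ),
      HasDerivWithinAt yt (yt t + ε * Z t * yt t + Real.exp (ε * Z t) * (xt t) ^ 2)
        (Set.Ici 0) t)
    (hx0 : x 0 = x₀) (hy0 : y 0 = y₀) (hxt0 : xt 0 = xt₀) (hyt0 : yt 0 = yt₀)
    (K : ℝ)
    (hK : K = ∫ s in Set.Ioi (0:ℝ),
      Real.exp (-3 * s + ε * (∫ r in (0:ℝ)..s, Z r) + ε * Z s)) :
    IntegrableOn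
      (fun s => Real.exp (-3 * s + ε * (∫ r in (0:ℝ)..s, Z r) + ε * Z s))
      (Set.Ioi (0:ℝ))
    ∧ (Tendsto (fun t => (xt t - x t, yt t - y t)) atTop (nhds (0, 0))
        ↔ yt₀ - y₀ = -(xt₀ ^ 2 - x₀ ^ 2) * K)
    ∧ (yt₀ - y₀ = -(xt₀ ^ 2 - x₀ ^ 2) * K →
        ∃ C c : ℝ, 0 < c ∧ ∀ t ≥ (0:ℝ),
          ‖(xt t - x t, yt t - y t)‖ ≤ C * Real.exp (-c * t)) := by
  have hφ : ∀ t ≥ (0:ℝ), |ε * ∫ r in (0:ℝ)..t, Z r| ≤ ε * M * t := fun t ht =>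
    RandomPlanar.abs_mul_integral_le hε hZbdd ht
  have hK' : K = ∫ s in Ioi 0, RandomPlanar.kernel ε Z s := hK
  have hG : ∀ t ≥ (0:ℝ), |K - ∫ s in (0:ℝ)..t, RandomPlanar.kernel ε Z s|
      ≤ exp (ε * M) / (3 - ε * M) * exp (-(3 - ε * M) * t) := fun t ht =>
    hK' ▸ RandomPlanar.abs_integral_Ioi_sub_kernel_le hε hεM hZcont hZbdd ht
  have hdx : ∀ t ≥ (0:ℝ), xt t - x t = (xt₀ - x₀) * exp (-t + ε * ∫ r in (0:ℝ)..t, Z r) :=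
    fun t ht => by
      rw [RandomPlanar.x_eq hZcont hxt ht, RandomPlanar.x_eq hZcont hx ht, hx0, hxt0]; ring
  have hdy : ∀ t ≥ (0:ℝ), yt t - y t = ((yt₀ - y₀) + (xt₀ ^ 2 - x₀ ^ 2) *
      ∫ s in (0:ℝ)..t, RandomPlanar.kernel ε Z s) * exp (t + ε * ∫ r in (0:ℝ)..t, Z r) :=
    fun t ht => by
      rw [RandomPlanar.y_eq hZcont hxt hyt ht, RandomPlanar.y_eq hZcont hx hy ht, hx0, hxt0,
        hy0, hyt0]; ring
  have hb : 1 + ε * M < 3 - ε * M := by linarith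
  exact ⟨RandomPlanar.integrableOn_kernel hε hεM hZcont hZbdd,
    StableLeaf.tendsto_iff hεM hb hφ hG hdx hdy,
    StableLeaf.exists_norm_le_exp hεM hb hφ hG hdx hdy⟩
end
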